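/- arXiv:2505.02155 — 4 statements merged into one kernel-verified Lean document; each statement's English description precedes it below -/
import Mathlib

section
/- Fix j_x > 0 and γ < 2. Then there exists a solution D of the effective-potential initial value problem on the whole half-line [0, ∞) (so D is C¹ on [0, ∞), C² on (0, ∞), D(0) = D'(0) = 0, D > 0 on (0, ∞), and D'' = j_x(6√D + 2/√D − 4γ) on (0, ∞)), and this solution satisfies D(x) → ∞ as x → ∞. -/
open Set Filter

namespace EffPot

open MeasureTheory intervalIntegral


noncomputable def F (jx γ : ℝ) (d : ℝ) : ℝ := 8 * jx * (Real.sqrt d * (d + 1) - γ * d)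

noncomputable def φ (jx γ : ℝ) (t : ℝ) : ℝ :=
  if 0 < t then (Real.sqrt (F jx γ t))⁻¹ else 1

variable {jx γ : ℝ}

lemma contF : Continuous (F jx γ) := by
  unfold F; fun_prop

lemma quad_pos (hγ : γ < 2) {t : ℝ} (ht : 0 ≤ t) :
    1 - (max γ 0) ^ 2 / 4 ≤ t + 1 - γ * Real.sqrt t := by
  have hs : 0 ≤ Real.sqrt t := Real.sqrt_nonneg t
  have hs2 : Real.sqrt t ^ 2 = t := Real.sq_sqrt ht
  have h1 : γ * Real.sqrt t ≤ max γ 0 * Real.sqrt t :=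
    mul_le_mul_of_nonneg_right (le_max_left _ _) hs
  nlinarith [sq_nonneg (Real.sqrt t - max γ 0 / 2)]

lemma m_pos (hγ : γ < 2) : 0 < 1 - (max γ 0) ^ 2 / 4 := by
  have h0 : 0 ≤ max γ 0 := le_max_right _ _
  have h2 : max γ 0 < 2 := max_lt hγ (by norm_num)
  nlinarith

lemma F_lower (hj : 0 < jx) (hγ : γ < 2) {t : ℝ} (ht : 0 ≤ t) :
    8 * jx * (1 - (max γ 0) ^ 2 / 4) * Real.sqrt t ≤ F jx γ t := by
  have hs : 0 ≤ Real.sqrt t := Real.sqrt_nonneg t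
  have hmul : Real.sqrt t * Real.sqrt t = t := Real.mul_self_sqrt ht
  have key : Real.sqrt t * (1 - (max γ 0) ^ 2 / 4)
      ≤ Real.sqrt t * (t + 1) - γ * t := by
    have h := mul_le_mul_of_nonneg_left (quad_pos hγ ht) hs
    have expand : Real.sqrt t * (t + 1 - γ * Real.sqrt t)
        = Real.sqrt t * (t + 1) - γ * (Real.sqrt t * Real.sqrt t) := by ring
    rw [hmul] at expand
    linarith [expand ▸ h]
  have h2 := mul_le_mul_of_nonneg_left key (show (0:ℝ) ≤ 8 * jx by positivity)
  unfold F; linarith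

lemma F_pos (hj : 0 < jx) (hγ : γ < 2) {t : ℝ} (ht : 0 < t) : 0 < F jx γ t := by
  have h := F_lower hj hγ ht.le
  have hs : 0 < Real.sqrt t := Real.sqrt_pos.2 ht
  have hm := m_pos (γ := γ) hγ
  have : 0 < 8 * jx * (1 - (max γ 0) ^ 2 / 4) * Real.sqrt t := by positivity
  linarith

lemma F_upper_le_one (hj : 0 < jx) {t : ℝ} (ht0 : 0 ≤ t) (ht1 : t ≤ 1) :
    F jx γ t ≤ 8 * jx * (2 + |γ|) * Real.sqrt t := by
  have hs : 0 ≤ Real.sqrt t := Real.sqrt_nonneg t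
  have hs1 : Real.sqrt t ≤ 1 := by
    rw [show (1:ℝ) = Real.sqrt 1 by simp]; exact Real.sqrt_le_sqrt ht1
  have hmul : Real.sqrt t * Real.sqrt t = t := Real.mul_self_sqrt ht0
  have ht_le : t ≤ Real.sqrt t := by nlinarith
  have h1 : -γ * t ≤ |γ| * Real.sqrt t := by
    calc -γ * t ≤ |γ| * t := mul_le_mul_of_nonneg_right (neg_le_abs γ) ht0
    _ ≤ |γ| * Real.sqrt t := mul_le_mul_of_nonneg_left ht_le (abs_nonneg γ)
  have h2 : Real.sqrt t * (t + 1) ≤ 2 * Real.sqrt t := by nlinarith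
  have key : Real.sqrt t * (t + 1) - γ * t ≤ (2 + |γ|) * Real.sqrt t := by linarith
  have h3 := mul_le_mul_of_nonneg_left key (show (0:ℝ) ≤ 8 * jx by positivity)
  unfold F; linarith

lemma F_upper_ge_one (hj : 0 < jx) {t : ℝ} (ht1 : 1 ≤ t) :
    F jx γ t ≤ 8 * jx * (2 + |γ|) * (Real.sqrt t * t) := by
  have ht0 : (0:ℝ) ≤ t := by linarith
  have hs : 0 ≤ Real.sqrt t := Real.sqrt_nonneg t
  have hs1 : 1 ≤ Real.sqrt t := by
    rw [show (1:ℝ) = Real.sqrt 1 by simp]; exact Real.sqrt_le_sqrt ht1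
  have hmul : Real.sqrt t * Real.sqrt t = t := Real.mul_self_sqrt ht0
  have h1 : -γ * t ≤ |γ| * (Real.sqrt t * t) := by
    calc -γ * t ≤ |γ| * t := mul_le_mul_of_nonneg_right (neg_le_abs γ) ht0
    _ ≤ |γ| * (Real.sqrt t * t) := by
        apply mul_le_mul_of_nonneg_left _ (abs_nonneg γ)
        nlinarith
  have h2 : Real.sqrt t * (t + 1) ≤ 2 * (Real.sqrt t * t) := by nlinarith
  have key : Real.sqrt t * (t + 1) - γ * t ≤ (2 + |γ|) * (Real.sqrt t * t) := by linarith
  have h3 := mul_le_mul_of_nonneg_left key (show (0:ℝ) ≤ 8 * jx by positivity)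
  unfold F; linarith


noncomputable def g (jx γ : ℝ) (d : ℝ) : ℝ := ∫ t in (0:ℝ)..d, φ jx γ t





-- placeholders for part-1 lemmas

lemma phi_pos (hj : 0 < jx) (hγ : γ < 2) (t : ℝ) : 0 < φ jx γ t := by
  unfold φ
  split_ifs with h
  · exact inv_pos.2 (Real.sqrt_pos.2 (F_pos hj hγ h))
  · norm_num

lemma phi_measurable : Measurable (φ jx γ) := by
  unfold φ
  exact Measurable.ite measurableSet_Ioi
    ((Real.continuous_sqrt.comp contF).measurable.inv) measurable_const

lemma sqrt_sqrt_eq {t : ℝ} (ht : 0 ≤ t) :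
    Real.sqrt (Real.sqrt t) = t ^ ((1:ℝ)/4) := by
  rw [Real.sqrt_eq_rpow, Real.sqrt_eq_rpow, ← Real.rpow_mul ht]
  norm_num

lemma sqrt_three_half {t : ℝ} (ht : 0 ≤ t) :
    Real.sqrt (Real.sqrt t * t) = t ^ ((3:ℝ)/4) := by
  have : Real.sqrt t * t = t ^ ((3:ℝ)/2) := by
    rw [show Real.sqrt t * t = t ^ ((1:ℝ)/2) * t ^ ((1:ℝ)) by
      rw [Real.rpow_one, Real.sqrt_eq_rpow], ← Real.rpow_add' ht (by norm_num)]
    norm_num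
  rw [this, Real.sqrt_eq_rpow, ← Real.rpow_mul ht]
  norm_num

lemma phi_upper (hj : 0 < jx) (hγ : γ < 2) {t : ℝ} (ht : 0 < t) :
    φ jx γ t ≤ (Real.sqrt (8 * jx * (1 - (max γ 0) ^ 2 / 4)))⁻¹ * t ^ (-(1/4) : ℝ) := by
  set A := 8 * jx * (1 - (max γ 0) ^ 2 / 4) with hA
  have hApos : 0 < A := by have := m_pos (γ := γ) hγ; positivity
  have hlow : A * Real.sqrt t ≤ F jx γ t := F_lower hj hγ ht.le
  have hlowpos : 0 < A * Real.sqrt t := by positivity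
  have h1 : Real.sqrt (A * Real.sqrt t) ≤ Real.sqrt (F jx γ t) := Real.sqrt_le_sqrt hlow
  have h2 : (Real.sqrt (F jx γ t))⁻¹ ≤ (Real.sqrt (A * Real.sqrt t))⁻¹ :=
    inv_anti₀ (Real.sqrt_pos.2 hlowpos) h1
  have h3 : Real.sqrt (A * Real.sqrt t) = Real.sqrt A * t ^ ((1:ℝ)/4) := by
    rw [Real.sqrt_mul hApos.le, sqrt_sqrt_eq ht.le]
  rw [φ, if_pos ht]
  calc (Real.sqrt (F jx γ t))⁻¹ ≤ (Real.sqrt A * t ^ ((1:ℝ)/4))⁻¹ := by rw [← h3]; exact h2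
  _ = (Real.sqrt A)⁻¹ * t ^ (-(1/4) : ℝ) := by
      rw [mul_inv, Real.rpow_neg ht.le]

lemma phi_lower_small (hj : 0 < jx) (hγ : γ < 2) {t : ℝ} (ht : 0 < t) (ht1 : t ≤ 1) :
    (Real.sqrt (8 * jx * (2 + |γ|)))⁻¹ * t ^ (-(1/4) : ℝ) ≤ φ jx γ t := by
  set K := 8 * jx * (2 + |γ|) with hK
  have hKpos : 0 < K := by positivity
  have hup : F jx γ t ≤ K * Real.sqrt t := F_upper_le_one hj ht.le ht1
  have hFpos : 0 < F jx γ t := F_pos hj hγ ht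
  have h1 : Real.sqrt (F jx γ t) ≤ Real.sqrt (K * Real.sqrt t) := Real.sqrt_le_sqrt hup
  have h2 : (Real.sqrt (K * Real.sqrt t))⁻¹ ≤ (Real.sqrt (F jx γ t))⁻¹ :=
    inv_anti₀ (Real.sqrt_pos.2 hFpos) h1
  have h3 : Real.sqrt (K * Real.sqrt t) = Real.sqrt K * t ^ ((1:ℝ)/4) := by
    rw [Real.sqrt_mul hKpos.le, sqrt_sqrt_eq ht.le]
  rw [φ, if_pos ht]
  calc (Real.sqrt K)⁻¹ * t ^ (-(1/4) : ℝ)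
      = (Real.sqrt (K * Real.sqrt t))⁻¹ := by
        rw [h3, mul_inv, Real.rpow_neg ht.le]
  _ ≤ _ := h2

lemma phi_lower_big (hj : 0 < jx) (hγ : γ < 2) {t : ℝ} (ht1 : 1 ≤ t) :
    (Real.sqrt (8 * jx * (2 + |γ|)))⁻¹ * t ^ (-(3/4) : ℝ) ≤ φ jx γ t := by
  have ht : (0:ℝ) < t := lt_of_lt_of_le one_pos ht1
  set K := 8 * jx * (2 + |γ|) with hK
  have hKpos : 0 < K := by positivity
  have hup : F jx γ t ≤ K * (Real.sqrt t * t) := F_upper_ge_one hj ht1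
  have hFpos : 0 < F jx γ t := F_pos hj hγ ht
  have h1 : Real.sqrt (F jx γ t) ≤ Real.sqrt (K * (Real.sqrt t * t)) := Real.sqrt_le_sqrt hup
  have h2 : (Real.sqrt (K * (Real.sqrt t * t)))⁻¹ ≤ (Real.sqrt (F jx γ t))⁻¹ :=
    inv_anti₀ (Real.sqrt_pos.2 hFpos) h1
  have h3 : Real.sqrt (K * (Real.sqrt t * t)) = Real.sqrt K * t ^ ((3:ℝ)/4) := by
    rw [Real.sqrt_mul hKpos.le, sqrt_three_half ht.le]
  rw [φ, if_pos ht]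
  calc (Real.sqrt K)⁻¹ * t ^ (-(3/4) : ℝ)
      = (Real.sqrt (K * (Real.sqrt t * t)))⁻¹ := by
        rw [h3, mul_inv, Real.rpow_neg ht.le]
  _ ≤ _ := h2

lemma phi_intble (hj : 0 < jx) (hγ : γ < 2) (a b : ℝ) :
    IntervalIntegrable (φ jx γ) volume a b := by
  suffices h : ∀ b : ℝ, IntervalIntegrable (φ jx γ) volume 0 b by
    exact (h a).symm.trans (h b)
  intro b
  rcases le_or_gt b 0 with hb | hb
  · have heq : EqOn (φ jx γ) (fun _ => (1:ℝ)) (uIcc 0 b) := by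
      intro t ht
      rw [uIcc_of_ge hb] at ht
      have h0 : ¬ 0 < t := not_lt.2 ht.2
      simp [φ, h0]
    exact (continuousOn_const.congr heq).intervalIntegrable
  · set C := (Real.sqrt (8 * jx * (1 - (max γ 0) ^ 2 / 4)))⁻¹ with hC
    have hrint : IntervalIntegrable (fun t : ℝ => C * t ^ (-(1/4) : ℝ)) volume 0 b :=
      (intervalIntegrable_rpow' (by norm_num)).const_mul C
    apply hrint.mono_fun' phi_measurable.aestronglyMeasurable.restrict
    rw [Filter.EventuallyLE, ae_restrict_iff' measurableSet_uIoc]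
    apply ae_of_all
    intro t ht
    rw [uIoc_of_le hb.le] at ht
    have htpos : 0 < t := ht.1
    have := phi_upper hj hγ htpos
    rw [Real.norm_eq_abs, abs_of_pos (phi_pos hj hγ t)]
    exact this








lemma contg (hj : 0 < jx) (hγ : γ < 2) : Continuous (g jx γ) :=
  intervalIntegral.continuous_primitive (phi_intble hj hγ) 0

lemma g_zero : g jx γ 0 = 0 := integral_same

lemma g_mono (hj : 0 < jx) (hγ : γ < 2) : StrictMono (g jx γ) := by
  intro a b hab
  have hsplit : g jx γ a + ∫ t in a..b, φ jx γ t = g jx γ b :=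
    integral_add_adjacent_intervals (phi_intble hj hγ 0 a) (phi_intble hj hγ a b)
  have hpos : 0 < ∫ t in a..b, φ jx γ t :=
    intervalIntegral_pos_of_pos_on (phi_intble hj hγ a b)
      (fun x _ => phi_pos hj hγ x) hab
  linarith

lemma g_eq_id_nonpos (hj : 0 < jx) (hγ : γ < 2) {d : ℝ} (hd : d ≤ 0) : g jx γ d = d := by
  have heq : EqOn (φ jx γ) (fun _ => (1:ℝ)) (uIcc 0 d) := by
    intro t ht
    rw [uIcc_of_ge hd] at ht
    have h0 : ¬ 0 < t := not_lt.2 ht.2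
    simp [φ, h0]
  rw [g, integral_congr heq, intervalIntegral.integral_const]
  simp

lemma g_atBot (hj : 0 < jx) (hγ : γ < 2) : Tendsto (g jx γ) atBot atBot := by
  apply Tendsto.congr' _ tendsto_id
  filter_upwards [eventually_le_atBot (0:ℝ)] with d hd
  exact (g_eq_id_nonpos hj hγ hd).symm

lemma phi_aux_c_pos (hj : 0 < jx) : 0 < (Real.sqrt (8 * jx * (2 + |γ|)))⁻¹ := by
  have : (0:ℝ) < 8 * jx * (2 + |γ|) := by positivity
  positivity

lemma g_lower_small (hj : 0 < jx) (hγ : γ < 2) {d : ℝ} (hd0 : 0 ≤ d) (hd1 : d ≤ 1) :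
    (Real.sqrt (8 * jx * (2 + |γ|)))⁻¹ * d ^ ((3:ℝ)/4) ≤ g jx γ d := by
  set c := (Real.sqrt (8 * jx * (2 + |γ|)))⁻¹ with hc
  have hcpos : 0 < c := phi_aux_c_pos hj
  have hint1 : IntervalIntegrable (fun t : ℝ => c * t ^ (-(1/4) : ℝ)) volume 0 d :=
    (intervalIntegrable_rpow' (by norm_num)).const_mul c
  have hmono : ∫ t in (0:ℝ)..d, c * t ^ (-(1/4) : ℝ) ≤ g jx γ d := by
    apply integral_mono_on hd0 hint1 (phi_intble hj hγ 0 d)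
    intro t ht
    rcases eq_or_lt_of_le ht.1 with h0 | h0
    · rw [← h0, Real.zero_rpow (by norm_num : (-(1/4) : ℝ) ≠ 0)]
      simpa [mul_zero] using (phi_pos hj hγ 0).le
    · exact phi_lower_small hj hγ h0 (ht.2.trans hd1)
  have hcalc : ∫ t in (0:ℝ)..d, c * t ^ (-(1/4) : ℝ) = c * ((4:ℝ)/3) * d ^ ((3:ℝ)/4) := by
    rw [intervalIntegral.integral_const_mul, integral_rpow (Or.inl (by norm_num))]
    rw [Real.zero_rpow (by norm_num : (-(1/4) : ℝ) + 1 ≠ 0)]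
    norm_num
    ring
  have hd34 : 0 ≤ d ^ ((3:ℝ)/4) := Real.rpow_nonneg hd0 _
  nlinarith [hmono, hcalc]

lemma g_atTop (hj : 0 < jx) (hγ : γ < 2) : Tendsto (g jx γ) atTop atTop := by
  set c := (Real.sqrt (8 * jx * (2 + |γ|)))⁻¹ with hc
  have hcpos : 0 < c := phi_aux_c_pos hj
  have key : ∀ d : ℝ, 1 ≤ d →
      g jx γ 1 + c * 4 * (d ^ ((1:ℝ)/4) - 1) ≤ g jx γ d := by
    intro d hd
    have hsplit : g jx γ 1 + ∫ t in (1:ℝ)..d, φ jx γ t = g jx γ d :=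
      integral_add_adjacent_intervals (phi_intble hj hγ 0 1) (phi_intble hj hγ 1 d)
    have hint1 : IntervalIntegrable (fun t : ℝ => c * t ^ (-(3/4) : ℝ)) volume 1 d :=
      (intervalIntegrable_rpow' (by norm_num)).const_mul c
    have hmono : ∫ t in (1:ℝ)..d, c * t ^ (-(3/4) : ℝ) ≤ ∫ t in (1:ℝ)..d, φ jx γ t := by
      apply integral_mono_on hd hint1 (phi_intble hj hγ 1 d)
      intro t ht
      exact phi_lower_big hj hγ ht.1
    have hcalc : ∫ t in (1:ℝ)..d, c * t ^ (-(3/4) : ℝ) = c * 4 * (d ^ ((1:ℝ)/4) - 1) := by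
      rw [intervalIntegral.integral_const_mul, integral_rpow (Or.inl (by norm_num))]
      rw [Real.one_rpow]
      norm_num
      ring
    linarith [hcalc ▸ hmono]
  have htends : Tendsto (fun d : ℝ => g jx γ 1 + c * 4 * (d ^ ((1:ℝ)/4) - 1)) atTop atTop := by
    apply tendsto_atTop_add_const_left
    apply Tendsto.const_mul_atTop (by positivity : (0:ℝ) < c * 4)
    have h4 : Tendsto (fun d : ℝ => d ^ ((1:ℝ)/4)) atTop atTop :=
      tendsto_rpow_atTop (by norm_num)
    exact tendsto_atTop_add_const_right atTop (-1) h4 |>.congr (fun x => by ring)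
  apply tendsto_atTop_mono' atTop _ htends
  filter_upwards [eventually_ge_atTop (1:ℝ)] with d hd
  exact key d hd








theorem main (jx γ : ℝ) (hj : 0 < jx) (hγ : γ < 2) :
    ∃ D : ℝ → ℝ,
      ContDiffOn ℝ 1 D (Ici 0) ∧ ContDiffOn ℝ 2 D (Ioi 0) ∧
      D 0 = 0 ∧ deriv D 0 = 0 ∧
      (∀ x ∈ Ioi (0 : ℝ), 0 < D x) ∧
      (∀ x ∈ Ioi (0 : ℝ),
        deriv (deriv D) x =
          jx * (6 * Real.sqrt (D x) + 2 / Real.sqrt (D x) - 4 * γ)) ∧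
      Tendsto D atTop atTop := by
  classical
  -- the inverse function
  have gsurj : Function.Surjective (g jx γ) :=
    (contg hj hγ).surjective (g_atTop hj hγ) (g_atBot hj hγ)
  set e : ℝ ≃o ℝ := StrictMono.orderIsoOfSurjective _ (g_mono hj hγ) gsurj with he
  set D : ℝ → ℝ := fun x => e.symm x with hD
  have hgD : ∀ x, g jx γ (D x) = x := fun x =>
    StrictMono.orderIsoOfSurjective_self_symm_apply _ (g_mono hj hγ) gsurj x
  have hDg : ∀ d, D (g jx γ d) = d := fun d =>
    StrictMono.orderIsoOfSurjective_symm_apply_self _ (g_mono hj hγ) gsurj d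
  have hDcont : Continuous D := e.symm.continuous
  have hDmono : StrictMono D := e.symm.strictMono
  have hD0 : D 0 = 0 := by
    have := hDg 0; rwa [g_zero] at this
  have hDpos : ∀ x ∈ Ioi (0:ℝ), 0 < D x := by
    intro x hx
    have := hDmono (show (0:ℝ) < x from hx)
    rwa [hD0] at this
  -- derivative of D at positive points
  have hasDerivD : ∀ x : ℝ, 0 < x → HasDerivAt D (Real.sqrt (F jx γ (D x))) x := by
    intro x hx
    have hdpos : 0 < D x := hDpos x hx
    have hFpos : 0 < F jx γ (D x) := F_pos hj hγ hdpos
    have hφcont : ContinuousAt (φ jx γ) (D x) := by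
      have hc : ContinuousAt (fun t => (Real.sqrt (F jx γ t))⁻¹) (D x) :=
        ((Real.continuous_sqrt.comp contF).continuousAt).inv₀
          (ne_of_gt (Real.sqrt_pos.2 hFpos))
      apply hc.congr
      filter_upwards [Ioi_mem_nhds hdpos] with t ht
      exact (if_pos ht).symm
    have hg' : HasDerivAt (g jx γ) (φ jx γ (D x)) (D x) :=
      integral_hasDerivAt_right (phi_intble hj hγ 0 (D x))
        (phi_measurable.stronglyMeasurable.stronglyMeasurableAtFilter) hφcont
    have hne : φ jx γ (D x) ≠ 0 := ne_of_gt (phi_pos hj hγ _)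
    have h := hg'.of_local_left_inverse hDcont.continuousAt hne
      (Eventually.of_forall hgD)
    have hval : (φ jx γ (D x))⁻¹ = Real.sqrt (F jx γ (D x)) := by
      simp only [φ]; rw [if_pos hdpos, inv_inv]
    rwa [hval] at h
  have derivD_eq : ∀ x : ℝ, 0 < x → deriv D x = Real.sqrt (F jx γ (D x)) :=
    fun x hx => (hasDerivD x hx).deriv
  -- second derivative machinery
  have hsqrtF : ∀ d : ℝ, 0 < d → HasDerivAt (fun y => Real.sqrt (F jx γ y))
      ((8 * jx * (1 / (2 * Real.sqrt d) * (d + 1) + Real.sqrt d - γ)) /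
        (2 * Real.sqrt (F jx γ d))) d := by
    intro d hd
    have hFpos := F_pos hj hγ hd
    have h1 : HasDerivAt Real.sqrt (1 / (2 * Real.sqrt d)) d :=
      Real.hasDerivAt_sqrt (ne_of_gt hd)
    have h2 : HasDerivAt (fun y : ℝ => y + 1) 1 d := (hasDerivAt_id d).add_const 1
    have h3 : HasDerivAt (fun y => Real.sqrt y * (y + 1))
        (1 / (2 * Real.sqrt d) * (d + 1) + Real.sqrt d * 1) d := h1.mul h2
    have h4 : HasDerivAt (fun y : ℝ => γ * y) γ d := by
      simpa using (hasDerivAt_id d).const_mul γ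
    have h5 : HasDerivAt (F jx γ)
        (8 * jx * (1 / (2 * Real.sqrt d) * (d + 1) + Real.sqrt d - γ)) d := by
      have h := ((h3.sub h4).const_mul (8 * jx))
      have : HasDerivAt (F jx γ)
          (8 * jx * (1 / (2 * Real.sqrt d) * (d + 1) + Real.sqrt d * 1 - γ)) d := h
      simpa using this
    have h6 : HasDerivAt Real.sqrt (1 / (2 * Real.sqrt (F jx γ d))) (F jx γ d) :=
      Real.hasDerivAt_sqrt (ne_of_gt hFpos)
    have h7 := h6.comp d h5
    exact h7.congr_deriv (by ring)
  have deriv_value : ∀ d : ℝ, 0 < d →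
      (8 * jx * (1 / (2 * Real.sqrt d) * (d + 1) + Real.sqrt d - γ)) /
        (2 * Real.sqrt (F jx γ d)) * Real.sqrt (F jx γ d)
      = jx * (6 * Real.sqrt d + 2 / Real.sqrt d - 4 * γ) := by
    intro d hd
    have hF := F_pos hj hγ hd
    have hsF : Real.sqrt (F jx γ d) ≠ 0 := ne_of_gt (Real.sqrt_pos.2 hF)
    have hs : Real.sqrt d ≠ 0 := ne_of_gt (Real.sqrt_pos.2 hd)
    have hss : Real.sqrt d * Real.sqrt d = d := Real.mul_self_sqrt hd.le
    have hcancel : ∀ a s : ℝ, s ≠ 0 → a / (2 * s) * s = a / 2 := by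
      intro a s h; field_simp
    rw [hcancel _ _ hsF]
    rw [show d + 1 = Real.sqrt d * Real.sqrt d + 1 by rw [hss]]
    field_simp
    ring
  have hasDeriv2 : ∀ x : ℝ, 0 < x → HasDerivAt (fun y => Real.sqrt (F jx γ (D y)))
      (jx * (6 * Real.sqrt (D x) + 2 / Real.sqrt (D x) - 4 * γ)) x := by
    intro x hx
    have hdpos := hDpos x hx
    have h := (hsqrtF (D x) hdpos).comp x (hasDerivD x hx)
    rwa [deriv_value (D x) hdpos] at h
  have deriv2_eq : ∀ x ∈ Ioi (0:ℝ), deriv (deriv D) x =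
      jx * (6 * Real.sqrt (D x) + 2 / Real.sqrt (D x) - 4 * γ) := by
    intro x hx
    have heq : deriv D =ᶠ[nhds x] fun y => Real.sqrt (F jx γ (D y)) := by
      filter_upwards [Ioi_mem_nhds (show (0:ℝ) < x from hx)] with y hy
      exact derivD_eq y hy
    rw [heq.deriv_eq]
    exact (hasDeriv2 x hx).deriv
  -- endpoint derivative at 0
  have hg1pos : 0 < g jx γ 1 := by
    have := g_mono hj hγ (show (0:ℝ) < 1 by norm_num)
    rwa [g_zero] at this
  set c := (Real.sqrt (8 * jx * (2 + |γ|)))⁻¹ with hc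
  have hcpos : 0 < c := phi_aux_c_pos hj
  have hDbound : ∀ x : ℝ, 0 < x → x ≤ g jx γ 1 → D x ≤ (x / c) ^ ((4:ℝ)/3) := by
    intro x hx hx1
    have hd1 : D x ≤ 1 := by
      have h := hDmono.monotone hx1
      rwa [hDg] at h
    have hd0 : 0 < D x := hDpos x hx
    have hlow : c * (D x) ^ ((3:ℝ)/4) ≤ x := by
      have h := g_lower_small hj hγ hd0.le hd1
      rwa [hgD x] at h
    have h34 : (D x) ^ ((3:ℝ)/4) ≤ x / c := by
      rw [le_div_iff₀ hcpos]
      linarith [hlow]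
    calc D x = ((D x) ^ ((3:ℝ)/4)) ^ ((4:ℝ)/3) := by
          rw [← Real.rpow_mul hd0.le, show (3:ℝ)/4 * (4/3) = 1 by norm_num, Real.rpow_one]
      _ ≤ (x / c) ^ ((4:ℝ)/3) :=
          Real.rpow_le_rpow (Real.rpow_nonneg hd0.le _) h34 (by norm_num)
  have hkey : ∀ x : ℝ, 0 < x → (x/c) ^ ((4:ℝ)/3) / x = (x/c) ^ ((1:ℝ)/3) / c := by
    intro x hx
    have hy : 0 < x / c := div_pos hx hcpos
    have h4 : (x/c) ^ ((4:ℝ)/3) = (x/c) ^ ((1:ℝ)/3) * (x/c) := by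
      rw [show (4:ℝ)/3 = 1/3 + 1 by norm_num, Real.rpow_add hy, Real.rpow_one]
    rw [h4]
    field_simp
  have hbound_tendsto : Tendsto (fun x : ℝ => (x/c) ^ ((1:ℝ)/3) / c)
      (nhdsWithin 0 (Ioi 0)) (nhds 0) := by
    have h1 : Tendsto (fun x : ℝ => x / c) (nhdsWithin 0 (Ioi 0)) (nhds 0) := by
      apply tendsto_nhdsWithin_of_tendsto_nhds
      have := (continuous_id.div_const c).tendsto (0:ℝ)
      simpa using this
    have h2 : ContinuousAt (fun y : ℝ => y ^ ((1:ℝ)/3)) 0 :=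
      Real.continuousAt_rpow_const 0 _ (Or.inr (by norm_num))
    have h3 := h2.tendsto.comp h1
    rw [Real.zero_rpow (by norm_num : ((1:ℝ)/3) ≠ 0)] at h3
    have h5 := h3.div_const c
    simpa using h5
  have hD0' : HasDerivWithinAt D 0 (Ici 0) 0 := by
    rw [hasDerivWithinAt_iff_tendsto_slope]
    rw [Ici_sdiff_left]
    have hslope : ∀ x : ℝ, slope D 0 x = D x / x := by
      intro x; rw [slope_def_field, hD0, sub_zero, sub_zero]
    apply squeeze_zero' (g := fun x : ℝ => (x/c) ^ ((1:ℝ)/3) / c)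
    · filter_upwards [self_mem_nhdsWithin] with x hx
      rw [hslope]
      exact div_nonneg (hDpos x hx).le (le_of_lt hx)
    · have hev : ∀ᶠ x in nhdsWithin (0:ℝ) (Ioi 0), x < g jx γ 1 :=
        eventually_nhdsWithin_of_eventually_nhds (eventually_lt_nhds hg1pos)
      filter_upwards [self_mem_nhdsWithin, hev] with x hx hx1
      rw [hslope]
      calc D x / x ≤ (x/c) ^ ((4:ℝ)/3) / x := by
            have hxpos : (0:ℝ) < x := hx
            exact (div_le_div_iff_of_pos_right hxpos).2 (hDbound x hxpos hx1.le)
        _ = (x/c) ^ ((1:ℝ)/3) / c := hkey x hx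
    · exact hbound_tendsto
  -- C^1 on Ici 0
  have hDiffIci : DifferentiableOn ℝ D (Ici 0) := by
    intro x hx
    rcases eq_or_lt_of_le (mem_Ici.mp hx) with h0 | h0
    · rw [← h0]; exact hD0'.differentiableWithinAt
    · exact (hasDerivD x h0).differentiableAt.differentiableWithinAt
  have hF0 : F jx γ 0 = 0 := by simp [F]
  have derivWithin_eq : ∀ x ∈ Ici (0:ℝ),
      derivWithin D (Ici 0) x = Real.sqrt (F jx γ (D x)) := by
    intro x hx
    rcases eq_or_lt_of_le (mem_Ici.mp hx) with h0 | h0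
    · rw [← h0, hD0'.derivWithin ((uniqueDiffOn_Ici 0) 0 self_mem_Ici), hD0, hF0]
      simp
    · rw [derivWithin_of_mem_nhds (mem_of_superset (Ioi_mem_nhds h0) Ioi_subset_Ici_self)]
      exact derivD_eq x h0
  have hC1 : ContDiffOn ℝ 1 D (Ici 0) := by
    rw [show (1 : WithTop ℕ∞) = 0 + 1 by norm_num,
      contDiffOn_succ_iff_derivWithin (uniqueDiffOn_Ici 0)]
    refine ⟨hDiffIci, by simp, ?_⟩
    rw [contDiffOn_zero]
    exact ((Real.continuous_sqrt.comp (contF.comp hDcont)).continuousOn).congr derivWithin_eq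
  -- C^2 on Ioi 0
  have hψ : ContDiffOn ℝ 1 (fun y => Real.sqrt (F jx γ (D y))) (Ioi 0) := by
    rw [show (1 : WithTop ℕ∞) = 0 + 1 by norm_num,
      contDiffOn_succ_iff_deriv_of_isOpen isOpen_Ioi]
    refine ⟨fun x hx => (hasDeriv2 x hx).differentiableAt.differentiableWithinAt, by simp, ?_⟩
    rw [contDiffOn_zero]
    have hcont2 : ContinuousOn
        (fun x => jx * (6 * Real.sqrt (D x) + 2 / Real.sqrt (D x) - 4 * γ)) (Ioi 0) := by
      apply continuousOn_const.mul
      apply ContinuousOn.sub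
      · apply ContinuousOn.add
        · exact continuousOn_const.mul (Real.continuous_sqrt.comp hDcont).continuousOn
        · exact continuousOn_const.div (Real.continuous_sqrt.comp hDcont).continuousOn
            (fun x hx => ne_of_gt (Real.sqrt_pos.2 (hDpos x hx)))
      · exact continuousOn_const
    exact hcont2.congr (fun x hx => (hasDeriv2 x hx).deriv)
  have hC2 : ContDiffOn ℝ 2 D (Ioi 0) := by
    rw [show (2 : WithTop ℕ∞) = 1 + 1 by norm_num,
      contDiffOn_succ_iff_deriv_of_isOpen isOpen_Ioi]
    refine ⟨fun x hx => (hasDerivD x hx).differentiableAt.differentiableWithinAt, by simp, ?_⟩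
    exact hψ.congr (fun x hx => derivD_eq x hx)
  -- deriv D 0 = 0 (D is not two-sided differentiable at 0)
  have hDid : ∀ y : ℝ, y ≤ 0 → D y = y := by
    intro y hy
    conv_lhs => rw [show y = g jx γ y from (g_eq_id_nonpos hj hγ hy).symm]
    exact hDg y
  have hnd : ¬ DifferentiableAt ℝ D 0 := by
    intro h
    have h1 : HasDerivAt D (deriv D 0) 0 := h.hasDerivAt
    have e1 : deriv D 0 = 0 := by
      have a1 := (h1.hasDerivWithinAt (s := Ici 0)).derivWithin
        ((uniqueDiffOn_Ici 0) 0 self_mem_Ici)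
      have a2 := hD0'.derivWithin ((uniqueDiffOn_Ici 0) 0 self_mem_Ici)
      rw [a2] at a1
      linarith
    have hid : HasDerivWithinAt D 1 (Iic 0) 0 := by
      have hid' : HasDerivWithinAt (fun y : ℝ => y) 1 (Iic 0) 0 :=
        (hasDerivAt_id 0).hasDerivWithinAt
      exact hid'.congr (fun y hy => hDid y hy) (hDid 0 le_rfl)
    have e2 : deriv D 0 = 1 := by
      have a1 := (h1.hasDerivWithinAt (s := Iic 0)).derivWithin
        ((uniqueDiffOn_Iic 0) 0 self_mem_Iic)
      have a2 := hid.derivWithin ((uniqueDiffOn_Iic 0) 0 self_mem_Iic)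
      rw [a2] at a1
      linarith
    rw [e1] at e2; norm_num at e2
  have hderiv0 : deriv D 0 = 0 := deriv_zero_of_not_differentiableAt hnd
  -- tendsto atTop
  have hTends : Tendsto D atTop atTop := by
    rw [tendsto_atTop_atTop]
    intro b
    refine ⟨g jx γ b, fun x hx => ?_⟩
    have h := hDmono.monotone hx
    rwa [hDg] at h
  exact ⟨D, hC1, hC2, hD0, hderiv0, hDpos, deriv2_eq, hTends⟩


end EffPot


/-- Case `γ < 2`: the effective-potential IVP
`D'' = jx(6√D + 2/√D - 4γ)`, `D(0) = D'(0) = 0` has a solution on the whole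
half-line `[0, ∞)` (`C¹` on `[0, ∞)`, `C²` on `(0, ∞)`, positive on `(0, ∞)`),
and this solution tends to `∞` as `x → ∞`. -/
theorem effective_potential_global_solution_of_lt_two (jx γ : ℝ)
    (hj : 0 < jx) (hγ : γ < 2) :
    ∃ D : ℝ → ℝ,
      ContDiffOn ℝ 1 D (Ici 0) ∧ ContDiffOn ℝ 2 D (Ioi 0) ∧
      D 0 = 0 ∧ deriv D 0 = 0 ∧
      (∀ x ∈ Ioi (0 : ℝ), 0 < D x) ∧
      (∀ x ∈ Ioi (0 : ℝ),
        deriv (deriv D) x =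
          jx * (6 * Real.sqrt (D x) + 2 / Real.sqrt (D x) - 4 * γ)) ∧
      Tendsto D atTop atTop := by
  exact EffPot.main jx γ hj hγ
end

section
/- Fix j_x > 0 and γ = 2. Then there exists a solution D of the effective-potential initial value problem on the whole half-line [0, ∞) (so D is C¹ on [0, ∞), C² on (0, ∞), D(0) = D'(0) = 0, D > 0 on (0, ∞), and D'' = j_x(6√D + 2/√D − 8) on (0, ∞)), and this solution satisfies D(x) → 1 as x → ∞. -/
open Set Filter

section Helpers
open Real



lemma my_hasDerivAt_tanh (x : ℝ) :
    HasDerivAt Real.tanh (1 - Real.tanh x ^ 2) x := by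
  have h : HasDerivAt (fun y => Real.sinh y / Real.cosh y)
      ((Real.cosh x * Real.cosh x - Real.sinh x * Real.sinh x) / Real.cosh x ^ 2) x :=
    (Real.hasDerivAt_sinh x).div (Real.hasDerivAt_cosh x) (Real.cosh_pos x).ne'
  have h2 : (fun y => Real.sinh y / Real.cosh y) = Real.tanh := by
    funext y; exact (Real.tanh_eq_sinh_div_cosh y).symm
  rw [h2] at h
  convert h using 1
  have hc := (Real.cosh_pos x).ne'
  rw [Real.tanh_eq_sinh_div_cosh]
  have := Real.cosh_sq_sub_sinh_sq x
  field_simp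

lemma my_abs_sinh_lt_cosh (x : ℝ) : |Real.sinh x| < Real.cosh x := by
  rw [abs_lt, Real.sinh_eq, Real.cosh_eq]
  constructor <;> nlinarith [Real.exp_pos x, Real.exp_pos (-x)]

lemma my_abs_tanh_lt_one (x : ℝ) : |Real.tanh x| < 1 := by
  rw [Real.tanh_eq_sinh_div_cosh, abs_div, abs_of_pos (Real.cosh_pos x),
    div_lt_one (Real.cosh_pos x)]
  exact my_abs_sinh_lt_cosh x

lemma my_tanh_pos {x : ℝ} (hx : 0 < x) : 0 < Real.tanh x := by
  rw [Real.tanh_eq_sinh_div_cosh]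
  exact div_pos (by simpa using hx) (Real.cosh_pos x)

lemma my_tendsto_tanh : Tendsto Real.tanh atTop (nhds 1) := by
  have h : ∀ y : ℝ, Real.tanh y = (1 - Real.exp (-2*y)) / (1 + Real.exp (-2*y)) := by
    intro y
    rw [Real.tanh_eq_sinh_div_cosh, Real.sinh_eq, Real.cosh_eq]
    have h1 : Real.exp (-2*y) = Real.exp (-y) * Real.exp (-y) := by
      rw [← Real.exp_add]; ring_nf
    have h2 : Real.exp (-y) = (Real.exp y)⁻¹ := Real.exp_neg y
    rw [h1, h2]
    have := (Real.exp_pos y).ne'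
    field_simp
  have he : Tendsto (fun y : ℝ => Real.exp (-2*y)) atTop (nhds 0) :=
    Real.tendsto_exp_atBot.comp (tendsto_id.const_mul_atTop_of_neg (by norm_num : (-2:ℝ) < 0))
  have hmain : Tendsto (fun y : ℝ => (1 - Real.exp (-2*y)) / (1 + Real.exp (-2*y)))
      atTop (nhds 1) := by
    have := Tendsto.div ((tendsto_const_nhds (x := (1:ℝ))).sub he)
      ((tendsto_const_nhds (x := (1:ℝ))).add he) (by norm_num : (1:ℝ) + 0 ≠ 0)
    have h10 : ((1:ℝ) - 0) / (1 + 0) = 1 := by norm_num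
    rw [h10] at this
    exact this
  exact hmain.congr (fun y => (h y).symm)

end Helpers

/-- Case `γ = 2`: the effective-potential IVP
`D'' = jx(6√D + 2/√D - 8)`, `D(0) = D'(0) = 0` has a solution on the whole
half-line `[0, ∞)` (`C¹` on `[0, ∞)`, `C²` on `(0, ∞)`, positive on `(0, ∞)`),
and this solution tends to `1` as `x → ∞`. -/
theorem effective_potential_global_solution_of_eq_two (jx γ : ℝ)
    (hj : 0 < jx) (hγ : γ = 2) :
    ∃ D : ℝ → ℝ,
      ContDiffOn ℝ 1 D (Ici 0) ∧ ContDiffOn ℝ 2 D (Ioi 0) ∧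
      D 0 = 0 ∧ deriv D 0 = 0 ∧
      (∀ x ∈ Ioi (0 : ℝ), 0 < D x) ∧
      (∀ x ∈ Ioi (0 : ℝ),
        deriv (deriv D) x =
          jx * (6 * Real.sqrt (D x) + 2 / Real.sqrt (D x) - 8)) ∧
      Tendsto D atTop (nhds 1) := by
  set c : ℝ := Real.sqrt (2 * jx) with hc_def
  have hc : 0 < c := Real.sqrt_pos.2 (by linarith)
  have hc2 : c ^ 2 = 2 * jx := Real.sq_sqrt (by linarith)
  set G : ℝ → ℝ := fun y => (2 / c) * (y - Real.tanh y) with hG_def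
  -- derivative of G
  have hGderiv : ∀ y, HasDerivAt G ((2 / c) * Real.tanh y ^ 2) y := by
    intro y
    have h := ((hasDerivAt_id y).sub (my_hasDerivAt_tanh y)).const_mul (2 / c)
    refine h.congr_deriv ?_
    ring
  have htanh_cont : Continuous Real.tanh := by
    have : Continuous fun y => Real.sinh y / Real.cosh y :=
      Real.continuous_sinh.div Real.continuous_cosh fun y => (Real.cosh_pos y).ne'
    exact this.congr fun y => (Real.tanh_eq_sinh_div_cosh y).symm
  have hGcont : Continuous G := (continuous_const.mul (continuous_id.sub htanh_cont))
  -- G is strictly monotone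
  have hGmono : StrictMono G := by
    apply strictMono_of_odd_strictMonoOn_nonneg
    · intro y; simp only [hG_def, Real.tanh_neg]; ring
    · apply strictMonoOn_of_deriv_pos (convex_Ici 0) hGcont.continuousOn
      intro y hy
      rw [interior_Ici, mem_Ioi] at hy
      rw [(hGderiv y).deriv]
      have := my_tanh_pos hy
      positivity
  -- G is surjective
  have hGsurj : Function.Surjective G := by
    apply hGcont.surjective
    · apply tendsto_atTop_mono (f := fun y => (2 / c) * (y - 1))
      · intro y
        have := (abs_lt.1 (my_abs_tanh_lt_one y)).2
        have h2c : 0 < 2 / c := by positivity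
        apply mul_le_mul_of_nonneg_left (by linarith) h2c.le
      · exact (tendsto_atTop_add_const_right _ (-1) tendsto_id).const_mul_atTop (by positivity)
    · apply tendsto_atBot_mono (f := fun y => (2 / c) * (y + 1))
      · intro y
        have := (abs_lt.1 (my_abs_tanh_lt_one y)).1
        have h2c : 0 < 2 / c := by positivity
        apply mul_le_mul_of_nonneg_left (by linarith) h2c.le
      · exact (tendsto_atBot_add_const_right _ 1 tendsto_id).const_mul_atBot (by positivity)
  -- inverse of G
  set e : ℝ ≃o ℝ := StrictMono.orderIsoOfSurjective G hGmono hGsurj with he_def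
  set Y : ℝ → ℝ := fun x => e.symm x with hY_def
  have hGY : ∀ x, G (Y x) = x := fun x =>
    StrictMono.orderIsoOfSurjective_self_symm_apply G hGmono hGsurj x
  have hYG : ∀ y, Y (G y) = y := fun y =>
    StrictMono.orderIsoOfSurjective_symm_apply_self G hGmono hGsurj y
  have hYcont : Continuous Y := (e.symm.continuous)
  have hYmono : StrictMono Y := e.symm.strictMono
  have hG0 : G 0 = 0 := by simp [hG_def]
  have hY0 : Y 0 = 0 := by
    have := hYG 0
    rwa [hG0] at this
  have hYpos : ∀ x > (0:ℝ), 0 < Y x := fun x hx => hY0 ▸ hYmono hx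
  have hYneg : ∀ x < (0:ℝ), Y x < 0 := fun x hx => hY0 ▸ hYmono hx
  have hYne : ∀ x ≠ (0:ℝ), Y x ≠ 0 := by
    intro x hx
    rcases hx.lt_or_gt with h | h
    · exact (hYneg x h).ne
    · exact (hYpos x h).ne'
  set t : ℝ → ℝ := fun x => Real.tanh (Y x) with ht_def
  have htcont : Continuous t := htanh_cont.comp hYcont
  have htne : ∀ x ≠ (0:ℝ), t x ≠ 0 := by
    intro x hx
    rcases (hYne x hx).lt_or_gt with h | h
    · have : 0 < Real.tanh (-(Y x)) := my_tanh_pos (by linarith)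
      rw [Real.tanh_neg] at this
      simp only [ht_def]; linarith
    · exact (my_tanh_pos h).ne'
  have ht0 : t 0 = 0 := by simp [ht_def, hY0]
  -- derivative of Y for x ≠ 0
  have hYderiv : ∀ x ≠ (0:ℝ), HasDerivAt Y ((2 / c * t x ^ 2)⁻¹) x := by
    intro x hx
    exact HasDerivAt.of_local_left_inverse hYcont.continuousAt (hGderiv (Y x))
      (by have := htne x hx; positivity)
      (Eventually.of_forall hGY)
  set D : ℝ → ℝ := fun x => t x ^ 4 with hD_def
  set Dp : ℝ → ℝ := fun x => 2 * c * t x * (1 - t x ^ 2) with hDp_def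
  have htderiv : ∀ x ≠ (0:ℝ), HasDerivAt t ((1 - t x ^ 2) * (2 / c * t x ^ 2)⁻¹) x := by
    intro x hx
    exact (my_hasDerivAt_tanh (Y x)).comp x (hYderiv x hx)
  have hDderiv : ∀ x ≠ (0:ℝ), HasDerivAt D (Dp x) x := by
    intro x hx
    have h := (htderiv x hx).pow 4
    refine h.congr_deriv ?_
    have htx := htne x hx
    simp only [hDp_def]
    field_simp
    ring
  have hDp0 : Dp 0 = 0 := by simp [hDp_def, ht0]
  have hDcont : Continuous D := (htcont.pow 4)
  have hDpcont : Continuous Dp :=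
    (continuous_const.mul htcont).mul (continuous_const.sub (htcont.pow 2))
  have hDderiv0 : HasDerivAt D (Dp 0) 0 :=
    hasDerivAt_of_hasDerivAt_of_ne hDderiv hDcont.continuousAt hDpcont.continuousAt
  have hDderiv' : ∀ x, HasDerivAt D (Dp x) x := by
    intro x
    rcases eq_or_ne x 0 with rfl | hx
    · exact hDderiv0
    · exact hDderiv x hx
  have hderivD : deriv D = Dp := funext fun x => (hDderiv' x).deriv
  -- second derivative on positive axis
  have hDpderiv : ∀ x ∈ Ioi (0:ℝ), HasDerivAt Dp
      (jx * (6 * t x ^ 2 + 2 / t x ^ 2 - 8)) x := by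
    intro x hx
    have hx0 : x ≠ 0 := (ne_of_gt hx)
    have h1 := ((htderiv x hx0).const_mul (2 * c)).mul
      ((hasDerivAt_const x (1:ℝ)).sub ((htderiv x hx0).pow 2))
    have h : HasDerivAt Dp
        (2 * c * ((1 - t x ^ 2) * (2 / c * t x ^ 2)⁻¹) * (1 - t x ^ 2) +
          2 * c * t x * (0 - 2 * t x ^ 1 * ((1 - t x ^ 2) * (2 / c * t x ^ 2)⁻¹))) x := by
      simpa [hDp_def, mul_assoc, Pi.mul_def, Pi.sub_def] using h1
    refine h.congr_deriv ?_
    have htx := htne x hx0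
    have hcne := hc.ne'
    field_simp
    linear_combination ((1 - t x ^ 2) * (1 - 3 * t x ^ 2)) * hc2
  refine ⟨D, ?_, ?_, ?_, ?_, ?_, ?_, ?_⟩
  · exact (contDiff_one_iff_deriv.2 ⟨fun x => (hDderiv' x).differentiableAt,
      by rw [hderivD]; exact hDpcont⟩).contDiffOn
  · rw [show (2 : WithTop ℕ∞) = 1 + 1 from by norm_num,
      contDiffOn_succ_iff_deriv_of_isOpen isOpen_Ioi]
    refine ⟨fun x hx => (hDderiv' x).differentiableAt.differentiableWithinAt,
      by simp, ?_⟩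
    rw [hderivD]
    rw [show (1 : WithTop ℕ∞) = 0 + 1 from by norm_num,
      contDiffOn_succ_iff_deriv_of_isOpen isOpen_Ioi]
    refine ⟨fun x hx => (hDpderiv x hx).differentiableAt.differentiableWithinAt,
      by simp, ?_⟩
    rw [contDiffOn_zero]
    have hcongr : ∀ x ∈ Ioi (0:ℝ), deriv Dp x = jx * (6 * t x ^ 2 + 2 / t x ^ 2 - 8) :=
      fun x hx => (hDpderiv x hx).deriv
    apply ContinuousOn.congr (f := fun x => jx * (6 * t x ^ 2 + 2 / t x ^ 2 - 8)) _ hcongr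
    apply ContinuousOn.mul continuousOn_const
    apply ContinuousOn.sub _ continuousOn_const
    apply ContinuousOn.add (continuousOn_const.mul ((htcont.pow 2).continuousOn))
    exact continuousOn_const.div ((htcont.pow 2).continuousOn)
      (fun x hx => pow_ne_zero 2 (htne x (ne_of_gt hx)))
  · simp [hD_def, ht0]
  · rw [hderivD]; exact hDp0
  · intro x hx
    exact pow_pos (my_tanh_pos (hYpos x hx)) 4
  · intro x hx
    have hsqrt : Real.sqrt (D x) = t x ^ 2 := by
      have h4 : D x = (t x ^ 2) ^ 2 := by simp only [hD_def]; ring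
      rw [h4, Real.sqrt_sq (sq_nonneg _)]
    rw [hderivD, (hDpderiv x hx).deriv, hsqrt]
  · have hYtop : Tendsto Y atTop atTop := by
      rw [tendsto_atTop_atTop]
      intro b
      refine ⟨G b, fun a ha => ?_⟩
      have := hYmono.monotone ha
      rwa [hYG] at this
    have httop : Tendsto t atTop (nhds 1) := my_tendsto_tanh.comp hYtop
    have := httop.pow 4
    simpa using this
end

section
/- Fix j_x > 0 and γ > 2. Then there exist a > 0 and a real function D on [0, a] that is C¹ on [0, a] and C² on (0, a), satisfies D''(x) = j_x(6√(D(x)) + 2/√(D(x)) − 4γ) and D(x) > 0 for x ∈ (0, a), and satisfies D(0) = D(a) = 0 and D'(0) = D'(a) = 0; consequently D can be extended to an a-periodic function on [0, ∞). -/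
open Set MeasureTheory intervalIntegral Filter Topology


namespace EffPotAux

noncomputable def tm (γ : ℝ) : ℝ := (γ - Real.sqrt (γ^2 - 4)) / 2
noncomputable def tp (γ : ℝ) : ℝ := (γ + Real.sqrt (γ^2 - 4)) / 2
noncomputable def Mv (γ : ℝ) : ℝ := (tm γ)^2
noncomputable def G (jx γ : ℝ) (y : ℝ) : ℝ :=
  8 * jx * Real.sqrt y * (y - γ * Real.sqrt y + 1)
noncomputable def gg (jx γ : ℝ) (y : ℝ) : ℝ := (Real.sqrt (G jx γ y))⁻¹
noncomputable def ff (jx γ : ℝ) (s : ℝ) : ℝ :=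
  jx * (6 * Real.sqrt s + 2 / Real.sqrt s - 4 * γ)

variable {jx γ : ℝ}

lemma sq_sub_pos (hγ : 2 < γ) : 0 < γ^2 - 4 := by nlinarith

lemma sqrt_pos' (hγ : 2 < γ) : 0 < Real.sqrt (γ^2 - 4) :=
  Real.sqrt_pos.2 (sq_sub_pos hγ)

lemma sqrt_lt (hγ : 2 < γ) : Real.sqrt (γ^2 - 4) < γ := by
  have h0 : (0:ℝ) ≤ γ := by linarith
  nlinarith [Real.sq_sqrt (le_of_lt (sq_sub_pos hγ)), Real.sqrt_nonneg (γ^2-4)]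

lemma tm_pos (hγ : 2 < γ) : 0 < tm γ := by
  have := sqrt_lt hγ; unfold tm; linarith

lemma tm_lt_tp (hγ : 2 < γ) : tm γ < tp γ := by
  have := sqrt_pos' hγ; unfold tm tp; linarith

lemma tp_pos (hγ : 2 < γ) : 0 < tp γ := (tm_pos hγ).trans (tm_lt_tp hγ)

lemma quad_factor (hγ : 2 < γ) (t : ℝ) :
    t^2 - γ * t + 1 = (t - tm γ) * (t - tp γ) := by
  have h := Real.sq_sqrt (le_of_lt (sq_sub_pos hγ))
  unfold tm tp; linear_combination (1/4 : ℝ) * h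

lemma Mv_pos (hγ : 2 < γ) : 0 < Mv γ := by
  exact pow_pos (tm_pos hγ) 2

lemma sqrt_Mv (hγ : 2 < γ) : Real.sqrt (Mv γ) = tm γ :=
  Real.sqrt_sq (le_of_lt (tm_pos hγ))

lemma G_eq (hγ : 2 < γ) {y : ℝ} (hy : 0 ≤ y) :
    G jx γ y = 8 * jx * Real.sqrt y *
      ((Real.sqrt y - tm γ) * (Real.sqrt y - tp γ)) := by
  have h1 : Real.sqrt y ^ 2 = y := Real.sq_sqrt hy
  rw [G, ← quad_factor hγ, h1]

lemma G_zero : G jx γ 0 = 0 := by simp [G]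

lemma G_Mv (hγ : 2 < γ) : G jx γ (Mv γ) = 0 := by
  rw [G_eq hγ (le_of_lt (Mv_pos hγ)), sqrt_Mv hγ]; ring

lemma sqrt_lt_tm (hγ : 2 < γ) {y : ℝ} (hy : y ∈ Ioo 0 (Mv γ)) :
    0 < Real.sqrt y ∧ Real.sqrt y < tm γ := by
  constructor
  · exact Real.sqrt_pos.2 hy.1
  · have := Real.sqrt_lt_sqrt (le_of_lt hy.1) hy.2
    rwa [sqrt_Mv hγ] at this

lemma G_pos (hj : 0 < jx) (hγ : 2 < γ) {y : ℝ} (hy : y ∈ Ioo 0 (Mv γ)) :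
    0 < G jx γ y := by
  obtain ⟨h1, h2⟩ := sqrt_lt_tm hγ hy
  rw [G_eq hγ (le_of_lt hy.1)]
  have h3 : Real.sqrt y < tp γ := h2.trans (tm_lt_tp hγ)
  have : 0 < (Real.sqrt y - tm γ) * (Real.sqrt y - tp γ) := by nlinarith
  positivity

lemma G_nonneg (hj : 0 < jx) (hγ : 2 < γ) {y : ℝ} (hy : y ∈ Icc 0 (Mv γ)) :
    0 ≤ G jx γ y := by
  rcases eq_or_lt_of_le hy.1 with h|h
  · simp [← h, G_zero]
  rcases eq_or_lt_of_le hy.2 with h2|h2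
  · simp [h2, G_Mv hγ]
  · exact le_of_lt (G_pos hj hγ ⟨h, h2⟩)

/-- key lower bound for integrability -/
lemma G_lb (hj : 0 < jx) (hγ : 2 < γ) {y : ℝ} (hy : y ∈ Ioo 0 (Mv γ)) :
    4 * jx * (tp γ - tm γ) / tm γ * Real.sqrt y * (Mv γ - y) ≤ G jx γ y := by
  obtain ⟨h1, h2⟩ := sqrt_lt_tm hγ hy
  have htm := tm_pos hγ
  have htp := tm_lt_tp hγ
  have hyy : Real.sqrt y ^ 2 = y := Real.sq_sqrt (le_of_lt hy.1)
  rw [G_eq hγ (le_of_lt hy.1)]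
  have hM : Mv γ - y = (tm γ - Real.sqrt y) * (tm γ + Real.sqrt y) := by
    rw [Mv]; linear_combination hyy
  rw [hM, div_mul_eq_mul_div, div_mul_eq_mul_div, div_le_iff₀ htm]
  have key : 4 * (tp γ - tm γ) * (tm γ + Real.sqrt y) ≤ 8 * (tp γ - Real.sqrt y) * tm γ := by
    nlinarith
  have fac : 0 ≤ jx * Real.sqrt y * (tm γ - Real.sqrt y) :=
    mul_nonneg (mul_nonneg (le_of_lt hj) (le_of_lt h1)) (by linarith)
  nlinarith [mul_le_mul_of_nonneg_left key fac]


lemma G_cont : Continuous (G jx γ) := by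
  unfold G
  exact (continuous_const.mul Real.continuous_sqrt).mul
    ((continuous_id.sub (continuous_const.mul Real.continuous_sqrt)).add continuous_const)

lemma gg_nonneg (y : ℝ) : 0 ≤ gg jx γ y := by
  unfold gg; positivity

lemma gg_meas : Measurable (gg jx γ) :=
  ((Real.continuous_sqrt.comp G_cont).measurable).inv

lemma sqrtG_pos (hj : 0 < jx) (hγ : 2 < γ) {y : ℝ} (hy : y ∈ Ioo 0 (Mv γ)) :
    0 < Real.sqrt (G jx γ y) := Real.sqrt_pos.2 (G_pos hj hγ hy)

lemma gg_pos (hj : 0 < jx) (hγ : 2 < γ) {y : ℝ} (hy : y ∈ Ioo 0 (Mv γ)) :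
    0 < gg jx γ y := inv_pos.2 (sqrtG_pos hj hγ hy)

lemma gg_contAt (hj : 0 < jx) (hγ : 2 < γ) {y : ℝ} (hy : y ∈ Ioo 0 (Mv γ)) :
    ContinuousAt (gg jx γ) y := by
  have hc : Continuous (fun z => Real.sqrt (G jx γ z)) :=
    Real.continuous_sqrt.comp (G_cont (jx := jx) (γ := γ))
  unfold gg
  exact hc.continuousAt.inv₀ (ne_of_gt (sqrtG_pos hj hγ hy))

lemma sqrt_sqrt_eq (y : ℝ) (hy : 0 ≤ y) :
    Real.sqrt (Real.sqrt y) = y ^ ((1:ℝ)/4) := by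
  rw [Real.sqrt_eq_rpow, Real.sqrt_eq_rpow, ← Real.rpow_mul hy]
  norm_num

/-- The constant in the lower bound for `G`. -/
noncomputable def cc (jx γ : ℝ) : ℝ := 4 * jx * (tp γ - tm γ) / tm γ

lemma cc_pos (hj : 0 < jx) (hγ : 2 < γ) : 0 < cc jx γ := by
  have h1 := tm_pos hγ; have h2 := tm_lt_tp hγ
  have h3 : 0 < tp γ - tm γ := sub_pos.2 h2
  exact div_pos (mul_pos (mul_pos (by norm_num) hj) h3) h1

lemma integrableOn_gg (hj : 0 < jx) (hγ : 2 < γ) :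
    IntegrableOn (gg jx γ) (Ioc 0 (Mv γ)) := by
  have hM := Mv_pos hγ
  have hc := cc_pos hj hγ
  have hsplit : Ioc (0:ℝ) (Mv γ) = Ioc 0 (Mv γ/2) ∪ Ioc (Mv γ/2) (Mv γ) := by
    rw [Ioc_union_Ioc_eq_Ioc] <;> linarith
  rw [hsplit]
  apply MeasureTheory.IntegrableOn.union
  · -- near 0 : bound by C₁ * y ^ (-1/4)
    set C1 : ℝ := (Real.sqrt (cc jx γ * (Mv γ/2)))⁻¹ with hC1
    have hbound : ∀ y ∈ Ioc (0:ℝ) (Mv γ/2), gg jx γ y ≤ C1 * y ^ (-(1:ℝ)/4) := by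
      intro y hy
      have hy0 : 0 < y := hy.1
      have hyM : y ∈ Ioo 0 (Mv γ) := ⟨hy0, by linarith [hy.2]⟩
      have hGlb := G_lb hj hγ hyM
      have h1 : cc jx γ * (Mv γ/2) * Real.sqrt y ≤ G jx γ y := by
        have : cc jx γ * Real.sqrt y * (Mv γ/2) ≤ cc jx γ * Real.sqrt y * (Mv γ - y) := by
          have : 0 ≤ cc jx γ * Real.sqrt y := by positivity
          nlinarith [hy.2]
        calc cc jx γ * (Mv γ/2) * Real.sqrt y = cc jx γ * Real.sqrt y * (Mv γ/2) := by ring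
        _ ≤ cc jx γ * Real.sqrt y * (Mv γ - y) := this
        _ ≤ G jx γ y := by unfold cc; linarith [hGlb]
      have hpos : 0 < cc jx γ * (Mv γ/2) * Real.sqrt y := by
        have := Real.sqrt_pos.2 hy0; positivity
      have h2 : Real.sqrt (cc jx γ * (Mv γ/2) * Real.sqrt y) ≤ Real.sqrt (G jx γ y) :=
        Real.sqrt_le_sqrt h1
      have h3 : gg jx γ y ≤ (Real.sqrt (cc jx γ * (Mv γ/2) * Real.sqrt y))⁻¹ := by
        unfold gg
        exact inv_anti₀ (Real.sqrt_pos.2 hpos) h2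
      have h4 : Real.sqrt (cc jx γ * (Mv γ/2) * Real.sqrt y)
          = Real.sqrt (cc jx γ * (Mv γ/2)) * y ^ ((1:ℝ)/4) := by
        rw [Real.sqrt_mul (by positivity), sqrt_sqrt_eq y (le_of_lt hy0)]
      calc gg jx γ y ≤ (Real.sqrt (cc jx γ * (Mv γ/2) * Real.sqrt y))⁻¹ := h3
      _ = C1 * (y ^ ((1:ℝ)/4))⁻¹ := by rw [h4, mul_inv]
      _ = C1 * y ^ (-(1:ℝ)/4) := by
          rw [← Real.rpow_neg (le_of_lt hy0)]; norm_num
    have hint : IntegrableOn (fun y : ℝ => C1 * y ^ (-(1:ℝ)/4)) (Ioc 0 (Mv γ/2)) := by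
      have := (intervalIntegrable_rpow' (a := 0) (b := Mv γ/2)
        (r := -(1:ℝ)/4) (by norm_num)).const_mul C1
      rwa [intervalIntegrable_iff_integrableOn_Ioc_of_le (by linarith)] at this
    refine Integrable.mono' hint (gg_meas.aestronglyMeasurable.restrict) ?_
    rw [ae_restrict_iff' measurableSet_Ioc]
    exact ae_of_all _ fun y hy => by
      rw [Real.norm_eq_abs, abs_of_nonneg (gg_nonneg y)]; exact hbound y hy
  · -- near M : bound by C₂ * (M - y) ^ (-1/2)
    set C2 : ℝ := (Real.sqrt (cc jx γ * Real.sqrt (Mv γ/2)))⁻¹ with hC2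
    have hbound : ∀ y ∈ Ioc (Mv γ/2) (Mv γ),
        gg jx γ y ≤ C2 * (Mv γ - y) ^ (-(1:ℝ)/2) := by
      intro y hy
      rcases eq_or_lt_of_le hy.2 with h|h
      · have hgg0 : gg jx γ (Mv γ) = 0 := by
          unfold gg; rw [G_Mv hγ]; simp
        rw [h, hgg0, sub_self, Real.zero_rpow (by norm_num), mul_zero]
      · have hy0 : 0 < y := by linarith [hy.1, hM]
        have hyM : y ∈ Ioo 0 (Mv γ) := ⟨hy0, h⟩
        have hGlb := G_lb hj hγ hyM
        have hsy : Real.sqrt (Mv γ/2) ≤ Real.sqrt y := Real.sqrt_le_sqrt (le_of_lt hy.1)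
        have h1 : cc jx γ * Real.sqrt (Mv γ/2) * (Mv γ - y) ≤ G jx γ y := by
          have h0 : 0 ≤ Mv γ - y := by linarith
          have : cc jx γ * Real.sqrt (Mv γ/2) * (Mv γ - y)
              ≤ cc jx γ * Real.sqrt y * (Mv γ - y) :=
            mul_le_mul_of_nonneg_right
              (mul_le_mul_of_nonneg_left hsy (le_of_lt hc)) h0
          unfold cc; unfold cc at this; linarith [hGlb]
        have hpos : 0 < cc jx γ * Real.sqrt (Mv γ/2) * (Mv γ - y) := by
          have h5 : 0 < Real.sqrt (Mv γ/2) := Real.sqrt_pos.2 (by linarith)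
          have h6 : 0 < Mv γ - y := by linarith
          positivity
        have h3 : gg jx γ y ≤ (Real.sqrt (cc jx γ * Real.sqrt (Mv γ/2) * (Mv γ - y)))⁻¹ := by
          unfold gg
          exact inv_anti₀ (Real.sqrt_pos.2 hpos) (Real.sqrt_le_sqrt h1)
        have h4 : Real.sqrt (cc jx γ * Real.sqrt (Mv γ/2) * (Mv γ - y))
            = Real.sqrt (cc jx γ * Real.sqrt (Mv γ/2)) * (Mv γ - y) ^ ((1:ℝ)/2) := by
          rw [Real.sqrt_mul (by positivity), Real.sqrt_eq_rpow (Mv γ - y)]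
        calc gg jx γ y ≤ _ := h3
        _ = C2 * ((Mv γ - y) ^ ((1:ℝ)/2))⁻¹ := by rw [h4, mul_inv]
        _ = C2 * (Mv γ - y) ^ (-(1:ℝ)/2) := by
            rw [← Real.rpow_neg (by linarith)]; norm_num
    have hint : IntegrableOn (fun y : ℝ => C2 * (Mv γ - y) ^ (-(1:ℝ)/2))
        (Ioc (Mv γ/2) (Mv γ)) := by
      have h0 : IntervalIntegrable (fun x : ℝ => x ^ (-(1:ℝ)/2)) volume 0 (Mv γ/2) :=
        intervalIntegrable_rpow' (by norm_num)
      have h1 := (h0.comp_sub_left (Mv γ)).const_mul C2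
      have e1 : Mv γ - 0 = Mv γ := by ring
      have e2 : Mv γ - Mv γ/2 = Mv γ/2 := by ring
      rw [e1, e2] at h1
      have := h1.symm
      rwa [intervalIntegrable_iff_integrableOn_Ioc_of_le (by linarith)] at this
    refine Integrable.mono' hint (gg_meas.aestronglyMeasurable.restrict) ?_
    rw [ae_restrict_iff' measurableSet_Ioc]
    exact ae_of_all _ fun y hy => by
      rw [Real.norm_eq_abs, abs_of_nonneg (gg_nonneg y)]; exact hbound y hy

lemma integrableOn_gg_Icc (hj : 0 < jx) (hγ : 2 < γ) :
    IntegrableOn (gg jx γ) (Icc 0 (Mv γ)) := by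
  rw [integrableOn_Icc_iff_integrableOn_Ioc]
  exact integrableOn_gg hj hγ

lemma gg_intInt (hj : 0 < jx) (hγ : 2 < γ) {y1 y2 : ℝ}
    (h1 : y1 ∈ Icc 0 (Mv γ)) (h2 : y2 ∈ Icc 0 (Mv γ)) :
    IntervalIntegrable (gg jx γ) volume y1 y2 := by
  apply MeasureTheory.IntegrableOn.intervalIntegrable
  apply (integrableOn_gg_Icc hj hγ).mono_set
  rw [← uIcc_of_le (le_of_lt (Mv_pos hγ))]
  exact uIcc_subset_uIcc (by rwa [uIcc_of_le (le_of_lt (Mv_pos hγ))])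
    (by rwa [uIcc_of_le (le_of_lt (Mv_pos hγ))])

noncomputable def phi (jx γ : ℝ) (x : ℝ) : ℝ := ∫ s in (0:ℝ)..x, gg jx γ s

lemma phi_zero : phi jx γ 0 = 0 := integral_same

lemma phi_cont (hj : 0 < jx) (hγ : 2 < γ) : ContinuousOn (phi jx γ) (Icc 0 (Mv γ)) := by
  have h := intervalIntegral.continuousOn_primitive_interval
    (a := 0) (b := Mv γ) (f := gg jx γ) (μ := volume) ?_
  · rwa [uIcc_of_le (le_of_lt (Mv_pos hγ))] at h
  · rw [uIcc_of_le (le_of_lt (Mv_pos hγ))]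
    exact integrableOn_gg_Icc hj hγ

lemma phi_strictMono (hj : 0 < jx) (hγ : 2 < γ) :
    StrictMonoOn (phi jx γ) (Icc 0 (Mv γ)) := by
  intro y1 h1 y2 h2 h12
  have key : 0 < phi jx γ y2 - phi jx γ y1 := by
    have heq : phi jx γ y2 - phi jx γ y1 = ∫ s in y1..y2, gg jx γ s :=
      integral_interval_sub_left (gg_intInt hj hγ (left_mem_Icc.2 (le_of_lt (Mv_pos hγ))) h2)
        (gg_intInt hj hγ (left_mem_Icc.2 (le_of_lt (Mv_pos hγ))) h1)
    rw [heq]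
    apply intervalIntegral.intervalIntegral_pos_of_pos_on
      (gg_intInt hj hγ h1 h2) _ h12
    intro x hx
    exact gg_pos hj hγ ⟨lt_of_le_of_lt h1.1 hx.1, lt_of_lt_of_le hx.2 h2.2⟩
  linarith
lemma phi_hasDerivAt (hj : 0 < jx) (hγ : 2 < γ) {y : ℝ} (hy : y ∈ Ioo 0 (Mv γ)) :
    HasDerivAt (phi jx γ) (gg jx γ y) y := by
  apply intervalIntegral.integral_hasDerivAt_right
    (gg_intInt hj hγ (left_mem_Icc.2 (le_of_lt (Mv_pos hγ)))
      ⟨le_of_lt hy.1, le_of_lt hy.2⟩)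
  · exact ⟨univ, univ_mem, gg_meas.aestronglyMeasurable.restrict⟩
  · exact gg_contAt hj hγ hy


/-- Half-period. -/
noncomputable def hv (jx γ : ℝ) : ℝ := phi jx γ (Mv γ)

lemma hv_pos (hj : 0 < jx) (hγ : 2 < γ) : 0 < hv jx γ := by
  have h := phi_strictMono hj hγ (left_mem_Icc.2 (le_of_lt (Mv_pos hγ)))
    (right_mem_Icc.2 (le_of_lt (Mv_pos hγ))) (Mv_pos hγ)
  rwa [phi_zero] at h

lemma phi_img (hj : 0 < jx) (hγ : 2 < γ) :
    phi jx γ '' (Icc 0 (Mv γ)) = Icc 0 (hv jx γ) := by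
  have hM := le_of_lt (Mv_pos hγ)
  apply Subset.antisymm
  · rintro _ ⟨y, hy, rfl⟩
    have mono := (phi_strictMono hj hγ).monotoneOn
    constructor
    · have := mono (left_mem_Icc.2 hM) hy hy.1
      rwa [phi_zero] at this
    · exact mono hy (right_mem_Icc.2 hM) hy.2
  · have h := (phi_cont hj hγ).surjOn_Icc (left_mem_Icc.2 hM) (right_mem_Icc.2 hM)
    rw [phi_zero] at h
    exact h

/-- The inverse function of `phi`. -/
noncomputable def Dh (jx γ : ℝ) : ℝ → ℝ := Function.invFunOn (phi jx γ) (Icc 0 (Mv γ))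

lemma Dh_mem (hj : 0 < jx) (hγ : 2 < γ) {x : ℝ} (hx : x ∈ Icc 0 (hv jx γ)) :
    Dh jx γ x ∈ Icc 0 (Mv γ) ∧ phi jx γ (Dh jx γ x) = x := by
  have : x ∈ phi jx γ '' (Icc 0 (Mv γ)) := by rw [phi_img hj hγ]; exact hx
  obtain ⟨y, hy, hyx⟩ := this
  exact ⟨Function.invFunOn_mem ⟨y, hy, hyx⟩, Function.invFunOn_eq ⟨y, hy, hyx⟩⟩

lemma Dh_phi (hj : 0 < jx) (hγ : 2 < γ) {y : ℝ} (hy : y ∈ Icc 0 (Mv γ)) :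
    Dh jx γ (phi jx γ y) = y :=
  (phi_strictMono hj hγ).injOn.leftInvOn_invFunOn hy

lemma Dh_zero (hj : 0 < jx) (hγ : 2 < γ) : Dh jx γ 0 = 0 := by
  have := Dh_phi hj hγ (left_mem_Icc.2 (le_of_lt (Mv_pos hγ)))
  rwa [phi_zero] at this

lemma Dh_hv (hj : 0 < jx) (hγ : 2 < γ) : Dh jx γ (hv jx γ) = Mv γ :=
  Dh_phi hj hγ (right_mem_Icc.2 (le_of_lt (Mv_pos hγ)))

lemma Dh_strictMono (hj : 0 < jx) (hγ : 2 < γ) :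
    StrictMonoOn (Dh jx γ) (Icc 0 (hv jx γ)) := by
  intro x1 hx1 x2 hx2 h12
  obtain ⟨m1, e1⟩ := Dh_mem hj hγ hx1
  obtain ⟨m2, e2⟩ := Dh_mem hj hγ hx2
  by_contra hcon
  push_neg at hcon
  have := (phi_strictMono hj hγ).monotoneOn m2 m1 hcon
  rw [e1, e2] at this
  linarith

lemma Dh_img (hj : 0 < jx) (hγ : 2 < γ) :
    Dh jx γ '' (Icc 0 (hv jx γ)) = Icc 0 (Mv γ) := by
  apply Subset.antisymm
  · rintro _ ⟨x, hx, rfl⟩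
    exact (Dh_mem hj hγ hx).1
  · intro y hy
    refine ⟨phi jx γ y, ?_, Dh_phi hj hγ hy⟩
    rw [← phi_img hj hγ]
    exact mem_image_of_mem _ hy

lemma Dh_mem_Ioo (hj : 0 < jx) (hγ : 2 < γ) {x : ℝ} (hx : x ∈ Ioo 0 (hv jx γ)) :
    Dh jx γ x ∈ Ioo 0 (Mv γ) := by
  obtain ⟨hm, he⟩ := Dh_mem hj hγ ⟨le_of_lt hx.1, le_of_lt hx.2⟩
  constructor
  · rcases eq_or_lt_of_le hm.1 with h|h
    · exfalso
      rw [← h, phi_zero] at he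
      exact absurd he.symm (ne_of_gt hx.1)
    · exact h
  · rcases eq_or_lt_of_le hm.2 with h|h
    · exfalso
      rw [h, ← hv] at he
      exact absurd he (ne_of_gt hx.2)
    · exact h

lemma Dh_cont (hj : 0 < jx) (hγ : 2 < γ) :
    ContinuousOn (Dh jx γ) (Icc 0 (hv jx γ)) := by
  have hM := Mv_pos hγ
  have hhv := hv_pos hj hγ
  intro x hx
  rcases eq_or_lt_of_le hx.1 with h0|h0
  · -- x = 0
    have h := (Dh_strictMono hj hγ).continuousWithinAt_right_of_image_mem_nhdsWithin
      (a := x) (Icc_mem_nhdsGE_of_mem (by rw [← h0]; exact ⟨le_refl 0, hhv⟩))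
      (by
        rw [Dh_img hj hγ, ← h0, Dh_zero hj hγ]
        exact Icc_mem_nhdsGE_of_mem ⟨le_refl 0, hM⟩)
    exact h.mono (by rw [← h0]; exact Icc_subset_Ici_self)
  rcases eq_or_lt_of_le hx.2 with h1|h1
  · -- x = hv
    have h := (Dh_strictMono hj hγ).continuousWithinAt_left_of_image_mem_nhdsWithin
      (a := x) (Icc_mem_nhdsLE_of_mem (by rw [h1]; exact ⟨hhv, le_refl _⟩))
      (by
        rw [Dh_img hj hγ, h1, Dh_hv hj hγ]
        exact Icc_mem_nhdsLE_of_mem ⟨hM, le_refl _⟩)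
    exact h.mono (by rw [h1]; exact Icc_subset_Iic_self)
  · -- interior
    have hmem := Dh_mem_Ioo hj hγ ⟨h0, h1⟩
    have h := (Dh_strictMono hj hγ).continuousAt_of_image_mem_nhds
      (Icc_mem_nhds h0 h1)
      (by rw [Dh_img hj hγ]; exact Icc_mem_nhds hmem.1 hmem.2)
    exact h.continuousWithinAt

lemma Dh_hasDerivAt (hj : 0 < jx) (hγ : 2 < γ) {x : ℝ} (hx : x ∈ Ioo 0 (hv jx γ)) :
    HasDerivAt (Dh jx γ) (Real.sqrt (G jx γ (Dh jx γ x))) x := by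
  have hmem := Dh_mem_Ioo hj hγ hx
  have hphi := phi_hasDerivAt hj hγ hmem
  have hcont : ContinuousAt (Dh jx γ) x :=
    (Dh_cont hj hγ x ⟨le_of_lt hx.1, le_of_lt hx.2⟩).continuousAt
      (Icc_mem_nhds hx.1 hx.2)
  have hne : gg jx γ (Dh jx γ x) ≠ 0 := ne_of_gt (gg_pos hj hγ hmem)
  have hev : ∀ᶠ y in 𝓝 x, phi jx γ (Dh jx γ y) = y := by
    filter_upwards [Icc_mem_nhds hx.1 hx.2] with y hy using (Dh_mem hj hγ hy).2
  have h := HasDerivAt.of_local_left_inverse hcont hphi hne hev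
  have : (gg jx γ (Dh jx γ x))⁻¹ = Real.sqrt (G jx γ (Dh jx γ x)) := by
    unfold gg; rw [inv_inv]
  rwa [this] at h


/-- An even function (about `c`) with one-sided derivative `0` at `c` has derivative `0`. -/
lemma even_hasDerivAt_Ici {f : ℝ → ℝ} {c : ℝ} (hsymm : ∀ s, f (c + s) = f (c - s))
    (hr : HasDerivWithinAt f 0 (Ici c) c) : HasDerivAt f 0 c := by
  have hl : HasDerivWithinAt f 0 (Iic c) c := by
    rw [hasDerivWithinAt_iff_tendsto_slope] at hr ⊢
    rw [Iic_diff_right]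
    rw [Ici_sdiff_left] at hr
    have hmap : Tendsto (fun x => 2*c - x) (𝓝[<] c) (𝓝[>] c) := by
      apply tendsto_nhdsWithin_of_tendsto_nhds_of_eventually_within
      · have h1 : Tendsto (fun x : ℝ => 2*c - x) (𝓝 c) (𝓝 (2*c - c)) :=
          (continuous_const.sub continuous_id).tendsto c
        have h2 : 2*c - c = c := by ring
        rw [h2] at h1
        exact h1.mono_left nhdsWithin_le_nhds
      · filter_upwards [self_mem_nhdsWithin] with x hx
        simp only [mem_Iio] at hx
        simp only [mem_Ioi]
        linarith
    have hcomp := hr.comp hmap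
    have hneg := hcomp.neg
    rw [neg_zero] at hneg
    refine Tendsto.congr' ?_ hneg
    filter_upwards [self_mem_nhdsWithin] with x hx
    simp only [mem_Iio] at hx
    have hfx : f x = f (2*c - x) := by
      have h := hsymm (x - c)
      have e1 : c + (x - c) = x := by ring
      have e2 : c - (x - c) = 2*c - x := by ring
      rw [e1, e2] at h
      exact h
    show -(slope f c ((fun x => 2*c - x) x)) = slope f c x
    simp only []
    rw [slope_def_field, slope_def_field, ← hfx,
      show 2*c - x - c = -(x - c) by ring, div_neg, neg_neg]
  have := hl.union hr
  rw [Iic_union_Ici] at this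
  exact hasDerivWithinAt_univ.1 this

lemma even_hasDerivAt_Iic {f : ℝ → ℝ} {c : ℝ} (hsymm : ∀ s, f (c + s) = f (c - s))
    (hl : HasDerivWithinAt f 0 (Iic c) c) : HasDerivAt f 0 c := by
  set F : ℝ → ℝ := fun x => f (2*c - x) with hF
  have hsymmF : ∀ s, F (c + s) = F (c - s) := by
    intro s
    have e1 : 2*c - (c + s) = c - s := by ring
    have e2 : 2*c - (c - s) = c + s := by ring
    have : f (2*c - (c + s)) = f (2*c - (c - s)) := by
      rw [e1, e2]
      exact (hsymm s).symm
    exact this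
  have hinner : HasDerivWithinAt (fun x : ℝ => 2*c - x) (-1) (Ici c) c :=
    ((hasDerivWithinAt_id c (Ici c)).const_sub (2*c))
  have hmaps : MapsTo (fun x : ℝ => 2*c - x) (Ici c) (Iic c) := by
    intro x hx
    simp only [mem_Ici] at hx
    simp only [mem_Iic]
    linarith
  have hcomp : HasDerivWithinAt F (0 * (-1)) (Ici c) c := by
    have h2c : (2*c - c) = c := by ring
    have hl' : HasDerivWithinAt f 0 (Iic c) ((fun x : ℝ => 2*c - x) c) := by
      simpa [h2c] using hl
    exact HasDerivWithinAt.comp c hl' hinner hmaps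
  rw [zero_mul] at hcomp
  have hFd : HasDerivAt F 0 c := even_hasDerivAt_Ici hsymmF hcomp
  have hinner' : HasDerivAt (fun x : ℝ => 2*c - x) (-1) c :=
    (hasDerivAt_id c).const_sub (2*c)
  have h2c : (2*c - c) = c := by ring
  have hFd' : HasDerivAt F 0 ((fun x : ℝ => 2*c - x) c) := by simpa [h2c] using hFd
  have hcomp2 := HasDerivAt.comp c hFd' hinner'
  rw [zero_mul] at hcomp2
  have : (F ∘ fun x : ℝ => 2*c - x) = f := by
    funext x
    show f (2*c - (2*c - x)) = f x
    congr 1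
    ring
  rwa [this] at hcomp2

/-- The full period. -/
noncomputable def av (jx γ : ℝ) : ℝ := 2 * hv jx γ

/-- The solution: even, periodic extension of the inverse of `phi`. -/
noncomputable def DD (jx γ : ℝ) (x : ℝ) : ℝ :=
  Dh jx γ (hv jx γ - |av jx γ * Int.fract (x / av jx γ) - hv jx γ|)

variable (jx γ) in
lemma av_eq : av jx γ = hv jx γ + hv jx γ := by unfold av; ring

lemma av_pos (hj : 0 < jx) (hγ : 2 < γ) : 0 < av jx γ := by
  have := hv_pos hj hγ; unfold av; linarith

lemma DD_periodic (hj : 0 < jx) (hγ : 2 < γ) :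
    Function.Periodic (DD jx γ) (av jx γ) := by
  intro x
  unfold DD
  have hav : av jx γ ≠ 0 := ne_of_gt (av_pos hj hγ)
  have : (x + av jx γ) / av jx γ = x / av jx γ + 1 := by
    field_simp
  rw [this, Int.fract_add_one]

lemma DD_eq_base (hj : 0 < jx) (hγ : 2 < γ) {x : ℝ} (hx : x ∈ Ico 0 (av jx γ)) :
    DD jx γ x = Dh jx γ (hv jx γ - |x - hv jx γ|) := by
  have hav := av_pos hj hγ
  unfold DD
  rw [Int.fract_eq_self.2 ⟨div_nonneg hx.1 (le_of_lt hav), (div_lt_one hav).2 hx.2⟩,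
    mul_div_cancel₀ _ (ne_of_gt hav)]

lemma DD_symm (hj : 0 < jx) (hγ : 2 < γ) (x : ℝ) : DD jx γ (-x) = DD jx γ x := by
  unfold DD
  rcases eq_or_ne (Int.fract (x / av jx γ)) 0 with h|h
  · have hneg : Int.fract (-x / av jx γ) = 0 := by
      rw [neg_div, Int.fract_neg_eq_zero]
      exact h
    rw [h, hneg]
  · have hneg : Int.fract (-x / av jx γ) = 1 - Int.fract (x / av jx γ) := by
      rw [neg_div]
      exact Int.fract_neg h
    rw [hneg]
    congr 1
    have e : av jx γ * (1 - Int.fract (x / av jx γ)) - hv jx γ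
        = -(av jx γ * Int.fract (x / av jx γ) - hv jx γ) := by
      rw [av_eq]; ring
    rw [e, abs_neg]

lemma DD_symm_hv (hj : 0 < jx) (hγ : 2 < γ) (s : ℝ) :
    DD jx γ (hv jx γ + s) = DD jx γ (hv jx γ - s) := by
  have h1 : DD jx γ (hv jx γ - s) = DD jx γ (s - hv jx γ) := by
    rw [show hv jx γ - s = -(s - hv jx γ) by ring, DD_symm hj hγ]
  rw [h1, show hv jx γ + s = (s - hv jx γ) + av jx γ by rw [av_eq]; ring,
    DD_periodic hj hγ]

lemma DD_on_first (hj : 0 < jx) (hγ : 2 < γ) {x : ℝ} (hx : x ∈ Icc 0 (hv jx γ)) :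
    DD jx γ x = Dh jx γ x := by
  have hhv := hv_pos hj hγ
  have hico : x ∈ Ico 0 (av jx γ) := ⟨hx.1, by rw [av_eq]; linarith [hx.2]⟩
  rw [DD_eq_base hj hγ hico, abs_of_nonpos (by linarith [hx.2])]
  congr 1
  ring

lemma DD_zero (hj : 0 < jx) (hγ : 2 < γ) : DD jx γ 0 = 0 := by
  rw [DD_on_first hj hγ (left_mem_Icc.2 (le_of_lt (hv_pos hj hγ))), Dh_zero hj hγ]

lemma DD_hv (hj : 0 < jx) (hγ : 2 < γ) : DD jx γ (hv jx γ) = Mv γ := by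
  rw [DD_on_first hj hγ (right_mem_Icc.2 (le_of_lt (hv_pos hj hγ))), Dh_hv hj hγ]

lemma DD_on_second (hj : 0 < jx) (hγ : 2 < γ) {x : ℝ} (hx : x ∈ Icc (hv jx γ) (av jx γ)) :
    DD jx γ x = Dh jx γ (av jx γ - x) := by
  have hhv := hv_pos hj hγ
  rcases eq_or_lt_of_le hx.2 with h|h
  · rw [h, sub_self]
    have : DD jx γ (av jx γ) = DD jx γ 0 := by
      have := DD_periodic hj hγ 0
      rwa [zero_add] at this
    rw [this, DD_zero hj hγ, Dh_zero hj hγ]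
  · have hico : x ∈ Ico 0 (av jx γ) := ⟨by linarith [hx.1], h⟩
    rw [DD_eq_base hj hγ hico, abs_of_nonneg (by linarith [hx.1])]
    congr 1
    rw [av_eq]
    ring

lemma DD_av (hj : 0 < jx) (hγ : 2 < γ) : DD jx γ (av jx γ) = 0 := by
  rw [DD_on_second hj hγ (right_mem_Icc.2 (by rw [av_eq]; linarith [hv_pos hj hγ])),
    sub_self, Dh_zero hj hγ]

lemma DD_eqOn (hj : 0 < jx) (hγ : 2 < γ) :
    ∀ x ∈ Icc 0 (av jx γ), DD jx γ x = Dh jx γ (hv jx γ - |x - hv jx γ|) := by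
  intro x hx
  rcases le_total x (hv jx γ) with h|h
  · rw [DD_on_first hj hγ ⟨hx.1, h⟩, abs_of_nonpos (by linarith)]
    congr 1; ring
  · rw [DD_on_second hj hγ ⟨h, hx.2⟩, abs_of_nonneg (by linarith)]
    congr 1; rw [av_eq]; ring

lemma inner_mapsTo (hj : 0 < jx) (hγ : 2 < γ) :
    MapsTo (fun x => hv jx γ - |x - hv jx γ|) (Icc 0 (av jx γ)) (Icc 0 (hv jx γ)) := by
  intro x hx
  have h1 : |x - hv jx γ| ≤ hv jx γ := by
    rw [abs_le]
    constructor
    · linarith [hx.1]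
    · rw [av_eq] at hx; linarith [hx.2]
  simp only [mem_Icc]
  constructor
  · linarith
  · linarith [abs_nonneg (x - hv jx γ)]

lemma DD_cont (hj : 0 < jx) (hγ : 2 < γ) :
    ContinuousOn (DD jx γ) (Icc 0 (av jx γ)) := by
  apply ContinuousOn.congr _ (DD_eqOn hj hγ)
  exact (Dh_cont hj hγ).comp
    ((continuous_const.sub (continuous_id.sub continuous_const).abs).continuousOn)
    (inner_mapsTo hj hγ)


lemma Dh_pos (hj : 0 < jx) (hγ : 2 < γ) {y : ℝ} (hy : y ∈ Ioc 0 (hv jx γ)) :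
    0 < Dh jx γ y := by
  rcases eq_or_lt_of_le hy.2 with h|h
  · rw [h, Dh_hv hj hγ]; exact Mv_pos hγ
  · exact (Dh_mem_Ioo hj hγ ⟨hy.1, h⟩).1

lemma G_hasDerivAt (hγ : 2 < γ) {y : ℝ} (hy : 0 < y) :
    HasDerivAt (G jx γ) (2 * ff jx γ y) y := by
  have hsq : 0 < Real.sqrt y := Real.sqrt_pos.2 hy
  have h1 : HasDerivAt Real.sqrt (1/(2*Real.sqrt y)) y := Real.hasDerivAt_sqrt (ne_of_gt hy)
  have hA : HasDerivAt (fun z => 8*jx*Real.sqrt z) (8*jx*(1/(2*Real.sqrt y))) y :=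
    h1.const_mul (8*jx)
  have hB : HasDerivAt (fun z => z - γ*Real.sqrt z + 1) (1 - γ*(1/(2*Real.sqrt y))) y :=
    ((hasDerivAt_id y).sub (h1.const_mul γ)).add_const 1
  have hC := hA.mul hB
  have heq : 8*jx*(1/(2*Real.sqrt y)) * (y - γ*Real.sqrt y + 1)
      + 8*jx*Real.sqrt y * (1 - γ*(1/(2*Real.sqrt y))) = 2 * ff jx γ y := by
    unfold ff
    have hyy : Real.sqrt y * Real.sqrt y = y := Real.mul_self_sqrt (le_of_lt hy)
    set t := Real.sqrt y with ht
    have htne : t ≠ 0 := ne_of_gt hsq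
    rw [← hyy]
    field_simp
    ring
  rw [heq] at hC
  exact hC

lemma DD_hasDerivAt_first (hj : 0 < jx) (hγ : 2 < γ) {x : ℝ} (hx : x ∈ Ioo 0 (hv jx γ)) :
    HasDerivAt (DD jx γ) (Real.sqrt (G jx γ (DD jx γ x))) x := by
  have hd := Dh_hasDerivAt hj hγ hx
  have hev : DD jx γ =ᶠ[𝓝 x] Dh jx γ := by
    filter_upwards [Ioo_mem_nhds hx.1 hx.2] with y hy
    exact DD_on_first hj hγ ⟨le_of_lt hy.1, le_of_lt hy.2⟩
  rw [DD_on_first hj hγ ⟨le_of_lt hx.1, le_of_lt hx.2⟩]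
  exact hd.congr_of_eventuallyEq hev

lemma mem_second_flip (hj : 0 < jx) (hγ : 2 < γ) {x : ℝ} (hx : x ∈ Ioo (hv jx γ) (av jx γ)) :
    av jx γ - x ∈ Ioo 0 (hv jx γ) := by
  rw [av_eq] at hx ⊢
  constructor <;> [linarith [hx.2]; linarith [hx.1]]

lemma DD_hasDerivAt_second (hj : 0 < jx) (hγ : 2 < γ) {x : ℝ}
    (hx : x ∈ Ioo (hv jx γ) (av jx γ)) :
    HasDerivAt (DD jx γ) (-Real.sqrt (G jx γ (DD jx γ x))) x := by
  have ha := mem_second_flip hj hγ hx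
  have hd := Dh_hasDerivAt hj hγ ha
  have hinner : HasDerivAt (fun y : ℝ => av jx γ - y) (-1) x :=
    (hasDerivAt_id x).const_sub (av jx γ)
  have hcomp := HasDerivAt.comp x hd hinner
  have hev : DD jx γ =ᶠ[𝓝 x] (Dh jx γ ∘ fun y => av jx γ - y) := by
    filter_upwards [Ioo_mem_nhds hx.1 hx.2] with y hy
    exact DD_on_second hj hγ ⟨le_of_lt hy.1, le_of_lt hy.2⟩
  have hval : DD jx γ x = Dh jx γ (av jx γ - x) :=
    DD_on_second hj hγ ⟨le_of_lt hx.1, le_of_lt hx.2⟩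
  rw [hval]
  have := hcomp.congr_of_eventuallyEq hev
  simpa using this

lemma tendsto_DD_within (hj : 0 < jx) (hγ : 2 < γ) {s : Set ℝ} {x : ℝ}
    (hs : s ⊆ Icc 0 (av jx γ)) (hx : x ∈ Icc 0 (av jx γ)) :
    Tendsto (DD jx γ) (𝓝[s] x) (𝓝 (DD jx γ x)) :=
  ((DD_cont hj hγ x hx).mono hs)

lemma tendsto_sqrtG_DD (hj : 0 < jx) (hγ : 2 < γ) {s : Set ℝ} {x : ℝ}
    (hs : s ⊆ Icc 0 (av jx γ)) (hx : x ∈ Icc 0 (av jx γ)) :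
    Tendsto (fun y => Real.sqrt (G jx γ (DD jx γ y))) (𝓝[s] x)
      (𝓝 (Real.sqrt (G jx γ (DD jx γ x)))) := by
  have hc : ContinuousAt (fun z => Real.sqrt (G jx γ z)) (DD jx γ x) :=
    (Real.continuous_sqrt.comp (G_cont (jx := jx) (γ := γ))).continuousAt
  exact hc.tendsto.comp (tendsto_DD_within hj hγ hs hx)

lemma Ioo_first_subset (hj : 0 < jx) (hγ : 2 < γ) :
    Ioo 0 (hv jx γ) ⊆ Icc 0 (av jx γ) := by
  intro y hy
  have := hv_pos hj hγ
  rw [av_eq]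
  exact ⟨le_of_lt hy.1, by linarith [hy.2]⟩

lemma Ioo_second_subset (hj : 0 < jx) (hγ : 2 < γ) :
    Ioo (hv jx γ) (av jx γ) ⊆ Icc 0 (av jx γ) := by
  intro y hy
  have := hv_pos hj hγ
  exact ⟨by linarith [hy.1], le_of_lt hy.2⟩

lemma DD_hasDerivWithinAt_Ici0 (hj : 0 < jx) (hγ : 2 < γ) :
    HasDerivWithinAt (DD jx γ) 0 (Ici 0) 0 := by
  have hhv := hv_pos hj hγ
  have hs : Ioo 0 (hv jx γ) ∈ 𝓝[>] (0:ℝ) :=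
    Ioo_mem_nhdsGT_of_mem ⟨le_refl 0, hhv⟩
  apply hasDerivWithinAt_Ici_of_tendsto_deriv
    (fun y hy => ((DD_hasDerivAt_first hj hγ hy)).differentiableAt.differentiableWithinAt)
    ?_ hs ?_
  · exact (tendsto_DD_within hj hγ (Ioo_first_subset hj hγ)
      ⟨le_refl 0, by rw [av_eq]; linarith⟩)
  · have h1 : Tendsto (fun y => Real.sqrt (G jx γ (DD jx γ y))) (𝓝[>] (0:ℝ)) (𝓝 0) := by
      have := (tendsto_sqrtG_DD hj hγ (Ioo_first_subset hj hγ)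
        ⟨le_refl 0, by rw [av_eq]; linarith⟩).mono_left (nhdsWithin_le_of_mem hs)
      rwa [DD_zero hj hγ, G_zero, Real.sqrt_zero] at this
    refine h1.congr' ?_
    filter_upwards [hs] with y hy
    exact ((DD_hasDerivAt_first hj hγ hy).deriv).symm

lemma DD_hasDerivAt_zero (hj : 0 < jx) (hγ : 2 < γ) : HasDerivAt (DD jx γ) 0 0 := by
  apply even_hasDerivAt_Ici ?_ (DD_hasDerivWithinAt_Ici0 hj hγ)
  intro s
  rw [zero_add, zero_sub, DD_symm hj hγ]

lemma DD_hasDerivWithinAt_Iic_hv (hj : 0 < jx) (hγ : 2 < γ) :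
    HasDerivWithinAt (DD jx γ) 0 (Iic (hv jx γ)) (hv jx γ) := by
  have hhv := hv_pos hj hγ
  have hs : Ioo 0 (hv jx γ) ∈ 𝓝[<] (hv jx γ) :=
    Ioo_mem_nhdsLT_of_mem ⟨hhv, le_refl _⟩
  have hmem : hv jx γ ∈ Icc 0 (av jx γ) := ⟨le_of_lt hhv, by rw [av_eq]; linarith⟩
  apply hasDerivWithinAt_Iic_of_tendsto_deriv
    (fun y hy => ((DD_hasDerivAt_first hj hγ hy)).differentiableAt.differentiableWithinAt)
    ?_ hs ?_
  · exact tendsto_DD_within hj hγ (Ioo_first_subset hj hγ) hmem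
  · have h1 : Tendsto (fun y => Real.sqrt (G jx γ (DD jx γ y))) (𝓝[<] (hv jx γ)) (𝓝 0) := by
      have := (tendsto_sqrtG_DD hj hγ (Ioo_first_subset hj hγ) hmem).mono_left
        (nhdsWithin_le_of_mem hs)
      rwa [DD_hv hj hγ, G_Mv hγ, Real.sqrt_zero] at this
    refine h1.congr' ?_
    filter_upwards [hs] with y hy
    exact ((DD_hasDerivAt_first hj hγ hy).deriv).symm

lemma DD_hasDerivAt_hv (hj : 0 < jx) (hγ : 2 < γ) : HasDerivAt (DD jx γ) 0 (hv jx γ) :=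
  even_hasDerivAt_Iic (DD_symm_hv hj hγ) (DD_hasDerivWithinAt_Iic_hv hj hγ)

lemma DD_symm_av (hj : 0 < jx) (hγ : 2 < γ) (s : ℝ) :
    DD jx γ (av jx γ + s) = DD jx γ (av jx γ - s) := by
  have h1 : DD jx γ (av jx γ + s) = DD jx γ s := by
    rw [add_comm]; exact DD_periodic hj hγ s
  have h2 : DD jx γ (av jx γ - s) = DD jx γ (-s) := by
    rw [show av jx γ - s = -s + av jx γ by ring]; exact DD_periodic hj hγ (-s)
  rw [h1, h2, DD_symm hj hγ]

lemma DD_hasDerivWithinAt_Iic_av (hj : 0 < jx) (hγ : 2 < γ) :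
    HasDerivWithinAt (DD jx γ) 0 (Iic (av jx γ)) (av jx γ) := by
  have hhv := hv_pos hj hγ
  have hs : Ioo (hv jx γ) (av jx γ) ∈ 𝓝[<] (av jx γ) :=
    Ioo_mem_nhdsLT_of_mem ⟨by rw [av_eq]; linarith, le_refl _⟩
  have hmem : av jx γ ∈ Icc 0 (av jx γ) := ⟨by rw [av_eq]; linarith, le_refl _⟩
  apply hasDerivWithinAt_Iic_of_tendsto_deriv
    (fun y hy => ((DD_hasDerivAt_second hj hγ hy)).differentiableAt.differentiableWithinAt)
    ?_ hs ?_
  · exact tendsto_DD_within hj hγ (Ioo_second_subset hj hγ) hmem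
  · have h1 : Tendsto (fun y => -Real.sqrt (G jx γ (DD jx γ y))) (𝓝[<] (av jx γ)) (𝓝 0) := by
      have := ((tendsto_sqrtG_DD hj hγ (Ioo_second_subset hj hγ) hmem).mono_left
        (nhdsWithin_le_of_mem hs)).neg
      rwa [DD_av hj hγ, G_zero, Real.sqrt_zero, neg_zero] at this
    refine h1.congr' ?_
    filter_upwards [hs] with y hy
    exact ((DD_hasDerivAt_second hj hγ hy).deriv).symm

lemma DD_hasDerivAt_av (hj : 0 < jx) (hγ : 2 < γ) : HasDerivAt (DD jx γ) 0 (av jx γ) :=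
  even_hasDerivAt_Iic (DD_symm_av hj hγ) (DD_hasDerivWithinAt_Iic_av hj hγ)


lemma sqrtG_Dh_hasDerivAt (hj : 0 < jx) (hγ : 2 < γ) {x : ℝ} (hx : x ∈ Ioo 0 (hv jx γ)) :
    HasDerivAt (fun y => Real.sqrt (G jx γ (Dh jx γ y))) (ff jx γ (Dh jx γ x)) x := by
  have hmem := Dh_mem_Ioo hj hγ hx
  have hd := Dh_hasDerivAt hj hγ hx
  have hGp := G_pos hj hγ hmem
  have hG := G_hasDerivAt (jx := jx) hγ hmem.1
  have hs := Real.hasDerivAt_sqrt (ne_of_gt hGp)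
  have hGD := HasDerivAt.comp x hG hd
  have hfull := HasDerivAt.comp x hs hGD
  have hne : Real.sqrt (G jx γ (Dh jx γ x)) ≠ 0 := ne_of_gt (Real.sqrt_pos.2 hGp)
  have heq : 1 / (2 * Real.sqrt (G jx γ (Dh jx γ x))) *
      (2 * ff jx γ (Dh jx γ x) * Real.sqrt (G jx γ (Dh jx γ x)))
      = ff jx γ (Dh jx γ x) := by
    field_simp
  rw [heq] at hfull
  have : ((√·) ∘ (G jx γ ∘ Dh jx γ)) = (fun y => Real.sqrt (G jx γ (Dh jx γ y))) := rfl
  rwa [this] at hfull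

lemma D2_first (hj : 0 < jx) (hγ : 2 < γ) {x : ℝ} (hx : x ∈ Ioo 0 (hv jx γ)) :
    HasDerivAt (deriv (DD jx γ)) (ff jx γ (DD jx γ x)) x := by
  have hev : deriv (DD jx γ) =ᶠ[𝓝 x] (fun y => Real.sqrt (G jx γ (Dh jx γ y))) := by
    filter_upwards [Ioo_mem_nhds hx.1 hx.2] with y hy
    rw [(DD_hasDerivAt_first hj hγ hy).deriv,
      DD_on_first hj hγ ⟨le_of_lt hy.1, le_of_lt hy.2⟩]
  rw [DD_on_first hj hγ ⟨le_of_lt hx.1, le_of_lt hx.2⟩]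
  exact (sqrtG_Dh_hasDerivAt hj hγ hx).congr_of_eventuallyEq hev

lemma D2_second (hj : 0 < jx) (hγ : 2 < γ) {x : ℝ} (hx : x ∈ Ioo (hv jx γ) (av jx γ)) :
    HasDerivAt (deriv (DD jx γ)) (ff jx γ (DD jx γ x)) x := by
  have ha := mem_second_flip hj hγ hx
  have houter := sqrtG_Dh_hasDerivAt hj hγ ha
  have hinner : HasDerivAt (fun y : ℝ => av jx γ - y) (-1) x :=
    (hasDerivAt_id x).const_sub (av jx γ)
  have h2 : HasDerivAt (fun y => -Real.sqrt (G jx γ (Dh jx γ (av jx γ - y))))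
      (ff jx γ (Dh jx γ (av jx γ - x))) x := by
    have h3 := (HasDerivAt.comp x houter hinner).neg
    have e1 : -(ff jx γ (Dh jx γ (av jx γ - x)) * (-1)) = ff jx γ (Dh jx γ (av jx γ - x)) := by
      ring
    rw [e1] at h3
    exact h3
  have hev : deriv (DD jx γ)
      =ᶠ[𝓝 x] (fun y => -Real.sqrt (G jx γ (Dh jx γ (av jx γ - y)))) := by
    filter_upwards [Ioo_mem_nhds hx.1 hx.2] with y hy
    rw [(DD_hasDerivAt_second hj hγ hy).deriv,
      DD_on_second hj hγ ⟨le_of_lt hy.1, le_of_lt hy.2⟩]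
  rw [DD_on_second hj hγ ⟨le_of_lt hx.1, le_of_lt hx.2⟩]
  exact h2.congr_of_eventuallyEq hev

lemma ff_contAt (hγ : 2 < γ) {s0 : ℝ} (h : 0 < s0) : ContinuousAt (ff jx γ) s0 := by
  have h1 : ContinuousAt Real.sqrt s0 := Real.continuous_sqrt.continuousAt
  have hne : Real.sqrt s0 ≠ 0 := ne_of_gt (Real.sqrt_pos.2 h)
  exact continuousAt_const.mul
    (((continuousAt_const.mul h1).add (continuousAt_const.div h1 hne)).sub continuousAt_const)

lemma deriv_DD_hv (hj : 0 < jx) (hγ : 2 < γ) : deriv (DD jx γ) (hv jx γ) = 0 :=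
  (DD_hasDerivAt_hv hj hγ).deriv

lemma D2_hv (hj : 0 < jx) (hγ : 2 < γ) :
    HasDerivAt (deriv (DD jx γ)) (ff jx γ (Mv γ)) (hv jx γ) := by
  have hhv := hv_pos hj hγ
  have hmem : hv jx γ ∈ Icc 0 (av jx γ) := ⟨le_of_lt hhv, by rw [av_eq]; linarith⟩
  have hsl : Ioo 0 (hv jx γ) ∈ 𝓝[<] (hv jx γ) := Ioo_mem_nhdsLT_of_mem ⟨hhv, le_refl _⟩
  have hsr : Ioo (hv jx γ) (av jx γ) ∈ 𝓝[>] (hv jx γ) :=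
    Ioo_mem_nhdsGT_of_mem ⟨le_refl _, by rw [av_eq]; linarith⟩
  have hffM : Tendsto (fun y => ff jx γ (DD jx γ y)) (𝓝[Icc 0 (av jx γ)] (hv jx γ))
      (𝓝 (ff jx γ (Mv γ))) := by
    have hDDt := tendsto_DD_within hj hγ (Subset.refl _) hmem
    rw [DD_hv hj hγ] at hDDt
    exact (ff_contAt (jx := jx) hγ (Mv_pos hγ)).tendsto.comp hDDt
  have left : HasDerivWithinAt (deriv (DD jx γ)) (ff jx γ (Mv γ)) (Iic (hv jx γ)) (hv jx γ) := by
    apply hasDerivWithinAt_Iic_of_tendsto_deriv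
      (fun y hy => (D2_first hj hγ hy).differentiableAt.differentiableWithinAt)
      ?_ hsl ?_
    · show Tendsto (deriv (DD jx γ)) (𝓝[Ioo 0 (hv jx γ)] (hv jx γ))
        (𝓝 (deriv (DD jx γ) (hv jx γ)))
      rw [deriv_DD_hv hj hγ]
      have h1 := tendsto_sqrtG_DD hj hγ (Ioo_first_subset hj hγ) hmem
      rw [DD_hv hj hγ, G_Mv hγ, Real.sqrt_zero] at h1
      refine h1.congr' ?_
      filter_upwards [self_mem_nhdsWithin] with y hy
      exact ((DD_hasDerivAt_first hj hγ hy).deriv).symm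
    · have h1 := hffM.mono_left (nhdsWithin_le_of_mem
        (by
          have : Ioo 0 (hv jx γ) ∈ 𝓝[<] (hv jx γ) := hsl
          exact mem_of_superset this (Ioo_first_subset hj hγ)))
      refine h1.congr' ?_
      filter_upwards [hsl] with y hy
      exact ((D2_first hj hγ hy).deriv).symm
  have right : HasDerivWithinAt (deriv (DD jx γ)) (ff jx γ (Mv γ)) (Ici (hv jx γ)) (hv jx γ) := by
    apply hasDerivWithinAt_Ici_of_tendsto_deriv
      (fun y hy => (D2_second hj hγ hy).differentiableAt.differentiableWithinAt)
      ?_ hsr ?_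
    · show Tendsto (deriv (DD jx γ)) (𝓝[Ioo (hv jx γ) (av jx γ)] (hv jx γ))
        (𝓝 (deriv (DD jx γ) (hv jx γ)))
      rw [deriv_DD_hv hj hγ]
      have h1 := (tendsto_sqrtG_DD hj hγ (Ioo_second_subset hj hγ) hmem).neg
      rw [DD_hv hj hγ, G_Mv hγ, Real.sqrt_zero, neg_zero] at h1
      refine h1.congr' ?_
      filter_upwards [self_mem_nhdsWithin] with y hy
      exact ((DD_hasDerivAt_second hj hγ hy).deriv).symm
    · have h1 := hffM.mono_left (nhdsWithin_le_of_mem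
        (mem_of_superset hsr (Ioo_second_subset hj hγ)))
      refine h1.congr' ?_
      filter_upwards [hsr] with y hy
      exact ((D2_second hj hγ hy).deriv).symm
  have := left.union right
  rw [Iic_union_Ici] at this
  exact hasDerivWithinAt_univ.1 this

lemma DD_pos (hj : 0 < jx) (hγ : 2 < γ) {x : ℝ} (hx : x ∈ Ioo 0 (av jx γ)) :
    0 < DD jx γ x := by
  have hhv := hv_pos hj hγ
  rw [DD_eqOn hj hγ x ⟨le_of_lt hx.1, le_of_lt hx.2⟩]
  apply Dh_pos hj hγ
  have habs : |x - hv jx γ| < hv jx γ := by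
    rw [abs_lt]
    have h2 := hx.2
    rw [av_eq] at h2
    constructor <;> [linarith [hx.1]; linarith]
  exact ⟨by linarith, by linarith [abs_nonneg (x - hv jx γ)]⟩

lemma DD_ode (hj : 0 < jx) (hγ : 2 < γ) {x : ℝ} (hx : x ∈ Ioo 0 (av jx γ)) :
    deriv (deriv (DD jx γ)) x = ff jx γ (DD jx γ x) := by
  rcases lt_trichotomy x (hv jx γ) with h|h|h
  · exact (D2_first hj hγ ⟨hx.1, h⟩).deriv
  · rw [h, (D2_hv hj hγ).deriv, DD_hv hj hγ]
  · exact (D2_second hj hγ ⟨h, hx.2⟩).deriv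

lemma DD_diff_abs (hj : 0 < jx) (hγ : 2 < γ) {x : ℝ} (hx : x ∈ Icc 0 (av jx γ)) :
    HasDerivAt (DD jx γ) (deriv (DD jx γ) x) x ∧
      |deriv (DD jx γ) x| = Real.sqrt (G jx γ (DD jx γ x)) := by
  have hhv := hv_pos hj hγ
  rcases eq_or_lt_of_le hx.1 with h0|h0
  · have hd := DD_hasDerivAt_zero hj hγ
    rw [← h0]
    rw [hd.deriv]
    refine ⟨by simpa [hd.deriv] using hd, ?_⟩
    rw [DD_zero hj hγ, G_zero, Real.sqrt_zero, abs_zero]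
  rcases eq_or_lt_of_le hx.2 with h1|h1
  · have hd := DD_hasDerivAt_av hj hγ
    rw [h1, hd.deriv]
    refine ⟨by simpa [hd.deriv] using hd, ?_⟩
    rw [DD_av hj hγ, G_zero, Real.sqrt_zero, abs_zero]
  rcases lt_trichotomy x (hv jx γ) with h|h|h
  · have hd := DD_hasDerivAt_first hj hγ ⟨h0, h⟩
    rw [hd.deriv]
    exact ⟨hd, abs_of_nonneg (Real.sqrt_nonneg _)⟩
  · have hd := DD_hasDerivAt_hv hj hγ
    rw [h, hd.deriv]
    refine ⟨hd, ?_⟩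
    rw [DD_hv hj hγ, G_Mv hγ, Real.sqrt_zero, abs_zero]
  · have hd := DD_hasDerivAt_second hj hγ ⟨h, h1⟩
    rw [hd.deriv]
    refine ⟨hd, ?_⟩
    rw [abs_neg, abs_of_nonneg (Real.sqrt_nonneg _)]

lemma deriv_DD_contOn (hj : 0 < jx) (hγ : 2 < γ) :
    ContinuousOn (deriv (DD jx γ)) (Icc 0 (av jx γ)) := by
  have hhv := hv_pos hj hγ
  have hav := av_pos hj hγ
  intro x hx
  rcases eq_or_lt_of_le hx.1 with h0|h0
  · -- x = 0
    rw [← h0]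
    have htar : ContinuousWithinAt (fun y => Real.sqrt (G jx γ (DD jx γ y)))
        (Icc 0 (av jx γ)) 0 :=
      tendsto_sqrtG_DD hj hγ (Subset.refl _) ⟨le_refl 0, le_of_lt hav⟩
    apply htar.congr_of_eventuallyEq
    · filter_upwards [inter_mem_nhdsWithin (Icc 0 (av jx γ)) (Iio_mem_nhds hhv)]
        with y hy
      rcases eq_or_lt_of_le hy.1.1 with hy0|hy0
      · rw [← hy0, (DD_hasDerivAt_zero hj hγ).deriv, DD_zero hj hγ, G_zero, Real.sqrt_zero]
      · rw [(DD_hasDerivAt_first hj hγ ⟨hy0, hy.2⟩).deriv]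
    · rw [(DD_hasDerivAt_zero hj hγ).deriv, DD_zero hj hγ, G_zero, Real.sqrt_zero]
  rcases eq_or_lt_of_le hx.2 with h1|h1
  · -- x = av
    rw [h1]
    have htar : ContinuousWithinAt (fun y => -Real.sqrt (G jx γ (DD jx γ y)))
        (Icc 0 (av jx γ)) (av jx γ) :=
      (tendsto_sqrtG_DD hj hγ (Subset.refl _) ⟨le_of_lt hav, le_refl _⟩).neg
    apply htar.congr_of_eventuallyEq
    · filter_upwards [inter_mem_nhdsWithin (Icc 0 (av jx γ))
        (Ioi_mem_nhds (show hv jx γ < av jx γ by rw [av_eq]; linarith))] with y hy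
      rcases eq_or_lt_of_le hy.1.2 with hy1|hy1
      · rw [hy1, (DD_hasDerivAt_av hj hγ).deriv, DD_av hj hγ, G_zero, Real.sqrt_zero, neg_zero]
      · rw [(DD_hasDerivAt_second hj hγ ⟨hy.2, hy1⟩).deriv]
    · rw [(DD_hasDerivAt_av hj hγ).deriv, DD_av hj hγ, G_zero, Real.sqrt_zero, neg_zero]
  rcases lt_trichotomy x (hv jx γ) with h|h|h
  · -- interior, first branch
    have hDhc : ContinuousAt (Dh jx γ) x :=
      (Dh_cont hj hγ x ⟨le_of_lt h0, le_of_lt h⟩).continuousAt (Icc_mem_nhds h0 h)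
    have hc : ContinuousAt (fun y => Real.sqrt (G jx γ (Dh jx γ y))) x :=
      ((Real.continuous_sqrt.comp (G_cont (jx := jx) (γ := γ))).continuousAt).comp hDhc
    have hev : deriv (DD jx γ) =ᶠ[𝓝 x] (fun y => Real.sqrt (G jx γ (Dh jx γ y))) := by
      filter_upwards [Ioo_mem_nhds h0 h] with y hy
      rw [(DD_hasDerivAt_first hj hγ hy).deriv,
        DD_on_first hj hγ ⟨le_of_lt hy.1, le_of_lt hy.2⟩]
    exact ((continuousAt_congr hev).2 hc).continuousWithinAt
  · -- x = hv : squeeze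
    have hmem : hv jx γ ∈ Icc 0 (av jx γ) := ⟨le_of_lt hhv, by rw [av_eq]; linarith⟩
    rw [h]
    show Tendsto (deriv (DD jx γ)) (𝓝[Icc 0 (av jx γ)] (hv jx γ))
      (𝓝 (deriv (DD jx γ) (hv jx γ)))
    rw [deriv_DD_hv hj hγ]
    have h1 := tendsto_sqrtG_DD hj hγ (Subset.refl _) hmem
    rw [DD_hv hj hγ, G_Mv hγ, Real.sqrt_zero] at h1
    apply squeeze_zero_norm' ?_ h1
    filter_upwards [self_mem_nhdsWithin] with y hy
    rw [Real.norm_eq_abs, (DD_diff_abs hj hγ hy).2]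
  · -- interior, second branch
    have ha : av jx γ - x ∈ Ioo 0 (hv jx γ) := mem_second_flip hj hγ ⟨h, h1⟩
    have hDhc : ContinuousAt (Dh jx γ) (av jx γ - x) :=
      (Dh_cont hj hγ _ ⟨le_of_lt ha.1, le_of_lt ha.2⟩).continuousAt
        (Icc_mem_nhds ha.1 ha.2)
    have hc : ContinuousAt (fun y => -Real.sqrt (G jx γ (Dh jx γ (av jx γ - y)))) x := by
      apply ContinuousAt.neg
      exact ((Real.continuous_sqrt.comp (G_cont (jx := jx) (γ := γ))).continuousAt).comp
        (hDhc.comp ((continuous_const.sub continuous_id).continuousAt))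
    have hev : deriv (DD jx γ)
        =ᶠ[𝓝 x] (fun y => -Real.sqrt (G jx γ (Dh jx γ (av jx γ - y)))) := by
      filter_upwards [Ioo_mem_nhds h h1] with y hy
      rw [(DD_hasDerivAt_second hj hγ hy).deriv,
        DD_on_second hj hγ ⟨le_of_lt hy.1, le_of_lt hy.2⟩]
    exact ((continuousAt_congr hev).2 hc).continuousWithinAt


lemma DD_contDiffOn_Icc (hj : 0 < jx) (hγ : 2 < γ) :
    ContDiffOn ℝ 1 (DD jx γ) (Icc 0 (av jx γ)) := by
  have hav := av_pos hj hγ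
  rw [show (1 : WithTop ℕ∞) = 0 + 1 from rfl,
    contDiffOn_succ_iff_derivWithin (uniqueDiffOn_Icc hav)]
  refine ⟨fun x hx => ((DD_diff_abs hj hγ hx).1).differentiableAt.differentiableWithinAt,
    by intro h; simp at h, ?_⟩
  rw [contDiffOn_zero]
  apply (deriv_DD_contOn hj hγ).congr
  intro x hx
  exact ((DD_diff_abs hj hγ hx).1).hasDerivWithinAt.derivWithin (uniqueDiffOn_Icc hav x hx)

lemma DD_contAt (hj : 0 < jx) (hγ : 2 < γ) {x : ℝ} (hx : x ∈ Ioo 0 (av jx γ)) :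
    ContinuousAt (DD jx γ) x :=
  (DD_cont hj hγ x ⟨le_of_lt hx.1, le_of_lt hx.2⟩).continuousAt (Icc_mem_nhds hx.1 hx.2)

lemma ff_DD_contOn (hj : 0 < jx) (hγ : 2 < γ) :
    ContinuousOn (fun y => ff jx γ (DD jx γ y)) (Ioo 0 (av jx γ)) := by
  intro x hx
  exact (((ff_contAt (jx := jx) hγ (DD_pos hj hγ hx)).comp
    (DD_contAt hj hγ hx))).continuousWithinAt

lemma DD_contDiffOn_Ioo (hj : 0 < jx) (hγ : 2 < γ) :
    ContDiffOn ℝ 2 (DD jx γ) (Ioo 0 (av jx γ)) := by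
  rw [show (2 : WithTop ℕ∞) = 1 + 1 from rfl, contDiffOn_succ_iff_deriv_of_isOpen isOpen_Ioo]
  refine ⟨fun x hx =>
    ((DD_diff_abs hj hγ (Ioo_subset_Icc_self hx)).1).differentiableAt.differentiableWithinAt,
    by intro h; simp at h, ?_⟩
  rw [show (1 : WithTop ℕ∞) = 0 + 1 from rfl, contDiffOn_succ_iff_deriv_of_isOpen isOpen_Ioo]
  refine ⟨?_, by intro h; simp at h, ?_⟩
  · intro x hx
    rcases lt_trichotomy x (hv jx γ) with h|h|h
    · exact (D2_first hj hγ ⟨hx.1, h⟩).differentiableAt.differentiableWithinAt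
    · rw [h]
      exact (D2_hv hj hγ).differentiableAt.differentiableWithinAt
    · exact (D2_second hj hγ ⟨h, hx.2⟩).differentiableAt.differentiableWithinAt
  · rw [contDiffOn_zero]
    apply (ff_DD_contOn hj hγ).congr
    intro x hx
    exact DD_ode hj hγ hx

end EffPotAux


/-- Case `γ > 2`: there exist `a > 0` and a function `D` which is `C¹` on `[0, a]`,
`C²` on `(0, a)`, positive on `(0, a)`, satisfies
`D'' = jx(6√D + 2/√D - 4γ)` on `(0, a)`, with `D(0) = D(a) = 0` and
`D'(0) = D'(a) = 0`; consequently `D` extends to an `a`-periodic function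
on `[0, ∞)`. -/
theorem effective_potential_periodic_solution_of_gt_two (jx γ : ℝ)
    (hj : 0 < jx) (hγ : 2 < γ) :
    ∃ (a : ℝ) (D : ℝ → ℝ), 0 < a ∧
      ContDiffOn ℝ 1 D (Icc 0 a) ∧ ContDiffOn ℝ 2 D (Ioo 0 a) ∧
      (∀ x ∈ Ioo 0 a, 0 < D x) ∧
      (∀ x ∈ Ioo 0 a,
        deriv (deriv D) x =
          jx * (6 * Real.sqrt (D x) + 2 / Real.sqrt (D x) - 4 * γ)) ∧
      D 0 = 0 ∧ D a = 0 ∧ deriv D 0 = 0 ∧ deriv D a = 0 ∧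
      ∃ E : ℝ → ℝ, Function.Periodic E a ∧ ∀ x ∈ Icc 0 a, E x = D x := by
  refine ⟨EffPotAux.av jx γ, EffPotAux.DD jx γ, EffPotAux.av_pos hj hγ,
    EffPotAux.DD_contDiffOn_Icc hj hγ, EffPotAux.DD_contDiffOn_Ioo hj hγ,
    fun x hx => EffPotAux.DD_pos hj hγ hx,
    fun x hx => EffPotAux.DD_ode hj hγ hx,
    EffPotAux.DD_zero hj hγ, EffPotAux.DD_av hj hγ,
    (EffPotAux.DD_hasDerivAt_zero hj hγ).deriv, (EffPotAux.DD_hasDerivAt_av hj hγ).deriv,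
    EffPotAux.DD jx γ, EffPotAux.DD_periodic hj hγ, fun x _ => rfl⟩
end

section
/- Let δ > 0, let J > 0, and let j_x satisfy 0 < j_x ≤ J. Assume 4δ³ ≥ 9·J·(1 + δ²)/√(2 + δ²). Then the function u₀(x) = δ²·x^{4/3} is a lower solution of the Child–Langmuir equation on (0, 1]: for every x ∈ (0, 1], (4/9)·δ²·x^{−2/3} ≥ j_x·(1 + δ²·x^{4/3})/√(δ²·x^{4/3}·(2 + δ²·x^{4/3})), where the left-hand side equals u₀''(x). -/
open Set

set_option maxHeartbeats 1000000

/-- Child–Langmuir lower solution: if `δ > 0`, `0 < jx ≤ J` and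
`4δ³ ≥ 9·J·(1 + δ²)/√(2 + δ²)`, then `u₀(x) = δ²·x^{4/3}` is a lower solution of
`φ'' = jx·(1 + φ)/√(φ(2 + φ))` on `(0, 1]`: for every `x ∈ (0, 1]`,
`(4/9)·δ²·x^{-2/3} ≥ jx·(1 + δ²x^{4/3})/√(δ²x^{4/3}(2 + δ²x^{4/3}))`,
where the left-hand side equals `u₀''(x)`. -/
theorem child_langmuir_lower_solution (δ J jx : ℝ) (hδ : 0 < δ) (hJ : 0 < J)
    (hjx : 0 < jx) (hjxJ : jx ≤ J)
    (hcond : 4 * δ ^ 3 ≥ 9 * J * (1 + δ ^ 2) / Real.sqrt (2 + δ ^ 2)) :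
    ∀ x ∈ Ioc (0 : ℝ) 1,
      (4 / 9) * δ ^ 2 * x ^ (-(2 : ℝ) / 3) ≥
        jx * (1 + δ ^ 2 * x ^ ((4 : ℝ) / 3)) /
          Real.sqrt (δ ^ 2 * x ^ ((4 : ℝ) / 3) * (2 + δ ^ 2 * x ^ ((4 : ℝ) / 3))) ∧
      deriv (deriv fun y : ℝ => δ ^ 2 * y ^ ((4 : ℝ) / 3)) x =
        (4 / 9) * δ ^ 2 * x ^ (-(2 : ℝ) / 3) := by
  rintro x ⟨hx0, hx1⟩
  constructor
  · -- the inequality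
    set t : ℝ := x ^ ((2:ℝ)/3) with ht
    have ht0 : 0 < t := Real.rpow_pos_of_pos hx0 _
    have ht1 : t ≤ 1 := Real.rpow_le_one hx0.le hx1 (by norm_num)
    have hx43 : x ^ ((4:ℝ)/3) = t ^ 2 := by
      rw [ht, ← Real.rpow_natCast (x ^ ((2:ℝ)/3)) 2, ← Real.rpow_mul hx0.le]
      norm_num
    have hxneg : x ^ (-(2:ℝ)/3) = t⁻¹ := by
      rw [ht, ← Real.rpow_neg hx0.le, neg_div]
    set u : ℝ := δ ^ 2 * x ^ ((4:ℝ)/3) with hu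
    have hu0 : 0 < u := by
      rw [hu, hx43]; positivity
    have huδ : u ≤ δ ^ 2 := by
      rw [hu, hx43]
      have h1 : t ^ 2 ≤ 1 := pow_le_one₀ ht0.le ht1
      nlinarith
    have hsqrt : Real.sqrt (u * (2 + u)) = δ * t * Real.sqrt (2 + u) := by
      rw [hu, hx43, Real.sqrt_mul (by positivity)]
      congr 1
      rw [show δ ^ 2 * t ^ 2 = (δ * t) ^ 2 by ring, Real.sqrt_sq (by positivity)]
    set s : ℝ := Real.sqrt (2 + u) with hs
    set S : ℝ := Real.sqrt (2 + δ ^ 2) with hS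
    have hs0 : 0 < s := Real.sqrt_pos.mpr (by linarith)
    have hS0 : 0 < S := Real.sqrt_pos.mpr (by positivity)
    have hs2 : s ^ 2 = 2 + u := Real.sq_sqrt (by linarith)
    have hS2 : S ^ 2 = 2 + δ ^ 2 := Real.sq_sqrt (by positivity)
    have hkey : (1 + u) * S ≤ (1 + δ ^ 2) * s := by
      have hsq : ((1 + u) * S) ^ 2 ≤ ((1 + δ ^ 2) * s) ^ 2 := by
        rw [mul_pow, mul_pow, hs2, hS2]
        have hfac : 0 ≤ (δ ^ 2 - u) * (3 + 2 * (u + δ ^ 2) + u * δ ^ 2) :=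
          mul_nonneg (by linarith) (by nlinarith)
        nlinarith
      exact le_of_pow_le_pow_left₀ two_ne_zero (by positivity) hsq
    have hcond' : 9 * J * (1 + δ ^ 2) ≤ 4 * δ ^ 3 * S := by
      rw [ge_iff_le, div_le_iff₀ hS0] at hcond
      linarith
    have hmain : 9 * (jx * (1 + u)) ≤ 4 * δ ^ 3 * s := by
      have h1 : 9 * (jx * (1 + u)) * S ≤ 9 * J * ((1 + δ ^ 2) * s) := by
        have := mul_le_mul hjxJ hkey (by positivity) hJ.le
        nlinarith
      have h2 : 9 * J * ((1 + δ ^ 2) * s) ≤ 4 * δ ^ 3 * s * S := by nlinarith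
      have h3 : 9 * (jx * (1 + u)) * S ≤ 4 * δ ^ 3 * s * S := h1.trans h2
      exact le_of_mul_le_mul_right h3 hS0
    rw [hsqrt, hxneg, ge_iff_le, div_le_iff₀ (by positivity)]
    have htt : t⁻¹ * t = 1 := inv_mul_cancel₀ ht0.ne'
    calc jx * (1 + u) ≤ 4 / 9 * δ ^ 3 * s := by linarith
      _ = 4 / 9 * δ ^ 2 * t⁻¹ * (δ * t * s) := by
          rw [show 4 / 9 * δ ^ 2 * t⁻¹ * (δ * t * s) = 4 / 9 * δ ^ 3 * s * (t⁻¹ * t) by ring,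
            htt, mul_one]
  · -- the derivative computation
    have hmem : Ioi (0:ℝ) ∈ nhds x := isOpen_Ioi.mem_nhds hx0
    have hderiv1 : ∀ y ∈ Ioi (0:ℝ), deriv (fun y : ℝ => δ ^ 2 * y ^ ((4:ℝ)/3)) y
        = δ ^ 2 * ((4:ℝ)/3 * y ^ ((4:ℝ)/3 - 1)) := fun y hy =>
      ((Real.hasDerivAt_rpow_const (Or.inl (ne_of_gt hy))).const_mul (δ ^ 2)).deriv
    have heq : deriv (fun y : ℝ => δ ^ 2 * y ^ ((4:ℝ)/3)) =ᶠ[nhds x]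
        fun y => δ ^ 2 * ((4:ℝ)/3 * y ^ ((4:ℝ)/3 - 1)) :=
      Filter.eventuallyEq_of_mem hmem hderiv1
    rw [heq.deriv_eq]
    have h2 : HasDerivAt (fun y : ℝ => δ ^ 2 * ((4:ℝ)/3 * y ^ ((4:ℝ)/3 - 1)))
        (δ ^ 2 * ((4:ℝ)/3 * (((4:ℝ)/3 - 1) * x ^ ((4:ℝ)/3 - 1 - 1)))) x :=
      ((Real.hasDerivAt_rpow_const (Or.inl (ne_of_gt hx0))).const_mul ((4:ℝ)/3)).const_mul (δ ^ 2)
    rw [h2.deriv]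
    norm_num
    ring
end
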